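/- arXiv:1606.03351 — 8 statements merged into one kernel-verified Lean document; each statement's English description precedes it below -/
import Mathlib

section
/- For any prime p ≥ 5, the sum ∑_{n=0}^{p-1} binomial(2n, n) is congruent to 1 modulo p if p ≡ 1 (mod 3), and congruent to -1 modulo p if p ≡ 2 (mod 3). -/
/-!
Writing `m = (p - 1) / 2`, we have `-1/2 ≡ m (mod p)`, so `binomial(2n, n) = (-4)^n binomial(-1/2, n)`
becomes `binomial(2n, n) ≡ (-4)^n binomial(m, n)` for `n < p`. Summing over `n` with the binomial
theorem gives `(1 - 4)^m = (-3)^((p-1)/2)`, which by Euler's criterion is the Legendre symbol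
`(-3 / p)`, and by quadratic reciprocity `(-3 / p) = (p / 3)`.
-/

open Nat

theorem Nat.factorial_mul_centralBinom_eq_neg_four_pow_mul_descFactorial {R : Type*} [CommRing R]
    {m : ℕ} (hm : (2 * m + 1 : R) = 0) (n : ℕ) :
    (n ! * centralBinom n : R) = (-4) ^ n * m.descFactorial n := by
  induction n with
  | zero => simp
  | succ n ih =>
    have hcentral : ((n + 1) * centralBinom (n + 1) : R) = 2 * (2 * n + 1) * centralBinom n := by
      simpa using congrArg ((↑) : ℕ → R) (succ_mul_centralBinom_succ n)
    have hdesc : ((m - n : ℕ) : R) * m.descFactorial n = (m - n) * m.descFactorial n := by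
      rcases le_or_gt n m with h | h
      · rw [Nat.cast_sub h]
      · simp [descFactorial_eq_zero_iff_lt.mpr h]
    -- `2 * m = -1` turns the factor `-4 * (m - n)` of `descFactorial` into `2 * (2 * n + 1)`
    rw [factorial_succ, descFactorial_succ]
    push_cast
    linear_combination (n ! : R) * hcentral + 2 * (2 * n + 1) * ih - (-4) ^ (n + 1) * hdesc
      + 2 * (-4) ^ n * m.descFactorial n * hm

namespace ZMod

variable {p : ℕ} [Fact p.Prime]

theorem centralBinom_eq_neg_four_pow_mul_choose (hp : p ≠ 2) {n : ℕ} (hn : n < p) :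
    (centralBinom n : ZMod p) = (-4) ^ n * (p / 2).choose n := by
  have hfact : (n ! : ZMod p) ≠ 0 := by
    rw [Ne, natCast_eq_zero_iff, (Fact.out : p.Prime).dvd_factorial, not_le]
    exact hn
  have hhalf : (2 * (p / 2 : ℕ) + 1 : ZMod p) = 0 := by
    simpa using congrArg ((↑) : ℕ → ZMod p)
      (Nat.two_mul_div_two_add_one_of_odd ((Fact.out : p.Prime).odd_of_ne_two hp))
  apply mul_left_cancel₀ hfact
  rw [factorial_mul_centralBinom_eq_neg_four_pow_mul_descFactorial hhalf,
    descFactorial_eq_factorial_mul_choose]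
  push_cast
  ring

theorem sum_range_centralBinom_eq_neg_three_pow (hp : p ≠ 2) :
    ∑ n ∈ Finset.range p, (centralBinom n : ZMod p) = (-3) ^ (p / 2) := by
  have hmp : p / 2 + 1 ≤ p := by
    have := (Fact.out : p.Prime).two_le
    omega
  calc ∑ n ∈ Finset.range p, (centralBinom n : ZMod p)
      = ∑ n ∈ Finset.range p, (-4) ^ n * ((p / 2).choose n : ZMod p) :=
        Finset.sum_congr rfl fun n hn =>
          centralBinom_eq_neg_four_pow_mul_choose hp (Finset.mem_range.mp hn)
    _ = ∑ n ∈ Finset.range (p / 2 + 1), (-4) ^ n * ((p / 2).choose n : ZMod p) := by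
        refine (Finset.sum_subset (Finset.range_subset_range.mpr hmp) fun n _ hn => ?_).symm
        rw [Finset.mem_range, not_lt] at hn
        simp [choose_eq_zero_of_lt (lt_of_succ_le hn)]
    _ = (-4 + 1) ^ (p / 2) := by
        rw [add_pow]
        exact Finset.sum_congr rfl fun n _ => by ring
    _ = (-3) ^ (p / 2) := by norm_num

end ZMod

theorem legendreSym.at_neg_three (p : ℕ) [Fact p.Prime] (hp : p ≠ 2) :
    legendreSym p (-3) = legendreSym 3 p := by
  have hreciprocity := legendreSym.quadratic_reciprocity' (p := 3) (q := p) (by norm_num) hp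
  rw [Nat.cast_ofNat] at hreciprocity
  rw [show (-3 : ℤ) = -1 * 3 by norm_num, legendreSym.mul, legendreSym.at_neg_one hp,
    ZMod.χ₄_eq_neg_one_pow (Nat.odd_iff.mp ((Fact.out : p.Prime).odd_of_ne_two hp)), hreciprocity]
  norm_num [← mul_assoc, ← pow_add, ← two_mul, pow_mul]

theorem sum_centralBinom_mod_p (p : ℕ) (hp : p.Prime) (hp5 : 5 ≤ p) :
    (p % 3 = 1 → (∑ n ∈ Finset.range p, (Nat.centralBinom n : ZMod p)) = 1) ∧
    (p % 3 = 2 → (∑ n ∈ Finset.range p, (Nat.centralBinom n : ZMod p)) = -1) := by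
  have : Fact p.Prime := ⟨hp⟩
  have hp2 : p ≠ 2 := by omega
  have hsum : (∑ n ∈ Finset.range p, (Nat.centralBinom n : ZMod p)) = legendreSym 3 p := by
    rw [ZMod.sum_range_centralBinom_eq_neg_three_pow hp2, ← legendreSym.at_neg_three p hp2,
      legendreSym.eq_pow, Int.cast_neg, Int.cast_ofNat]
  have hmod : legendreSym 3 p = legendreSym 3 (p % 3 : ℕ) := by
    rw [legendreSym.mod]
    norm_cast
  refine ⟨fun h => ?_, fun h => ?_⟩
  · rw [hsum, hmod, h, Nat.cast_one, legendreSym.at_one, Int.cast_one]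
  · rw [hsum, hmod, h, show legendreSym 3 ((2 : ℕ) : ℤ) = -1 by decide, Int.cast_neg, Int.cast_one]
end

section
/- For any prime p ≥ 5 and any positive integer r, the sum ∑_{n=0}^{rp-1} binomial(2n, n) is congruent to α_r modulo p if p ≡ 1 (mod 3), and congruent to -α_r modulo p if p ≡ 2 (mod 3), where α_r = ∑_{n=0}^{r-1} binomial(2n, n). -/
/-!
By Lucas's theorem `binom(2(qp + k), qp + k) ≡ binom(2q, q) binom(2k, k) (mod p)` for `k < p`, so
the sum over `n < rp` factors as `α_r · S` with `S = ∑_{k<p} binom(2k, k)`. Modulo `p`,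
`binom(2k, k) ≡ (-4)^k binom((p-1)/2, k)` for `k ≤ (p-1)/2` and `≡ 0` for `(p-1)/2 < k < p`, so
`S ≡ (1 - 4)^((p-1)/2) ≡ (-3 / p)` by Euler's criterion, and `(-3 / p) = (p / 3)` by quadratic
reciprocity.
-/

open Finset Nat

theorem Finset.sum_range_mul_eq_sum_sum {M : Type*} [AddCommMonoid M] (f : ℕ → M) (r p : ℕ) :
    ∑ n ∈ range (r * p), f n = ∑ q ∈ range r, ∑ k ∈ range p, f (q * p + k) := by
  induction r with
  | zero => simp
  | succ r ih => rw [succ_mul, sum_range_add, ih, sum_range_succ]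

section CentralBinom

variable {p : ℕ} [Fact p.Prime]

theorem cast_centralBinom_eq_zero {k : ℕ} (hk : k < p) (h2k : p ≤ 2 * k) :
    (k.centralBinom : ZMod p) = 0 := by
  rw [ZMod.natCast_eq_zero_iff, centralBinom_eq_two_mul_choose]
  exact (Fact.out : p.Prime).dvd_choose hk (by omega) h2k

theorem cast_centralBinom_mul_add (q : ℕ) {k : ℕ} (hk : k < p) :
    ((q * p + k).centralBinom : ZMod p) = q.centralBinom * k.centralBinom := by
  have hp : 0 < p := (Fact.out : p.Prime).pos
  have lucas := (ZMod.natCast_eq_natCast_iff _ _ _).mpr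
    (Choose.choose_modEq_choose_mod_mul_choose_div_nat (p := p) (n := 2 * (q * p + k))
      (k := q * p + k))
  rw [centralBinom_eq_two_mul_choose, lucas, add_comm, add_mul_mod_self_right,
    add_mul_div_right _ _ hp, div_eq_of_lt hk, mod_eq_of_lt hk, zero_add]
  rcases lt_or_ge (2 * k) p with h | h
  · rw [show 2 * (k + q * p) = 2 * k + 2 * q * p by ring, add_mul_mod_self_right,
      add_mul_div_right _ _ hp, div_eq_of_lt h, mod_eq_of_lt h, zero_add,
      centralBinom_eq_two_mul_choose, centralBinom_eq_two_mul_choose]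
    push_cast; ring
  · -- the low base-`p` digit of `2(qp + k)` is `2k - p < k`, and `p ∣ binom(2k, k)`
    have hlow : 2 * k - p < p := by omega
    rw [show 2 * (k + q * p) = (2 * k - p) + (2 * q + 1) * p by zify [h]; ring,
      add_mul_mod_self_right, mod_eq_of_lt hlow, choose_eq_zero_of_lt (by omega),
      cast_centralBinom_eq_zero hk h]
    simp

theorem sum_range_mul_centralBinom (r : ℕ) :
    ∑ n ∈ range (r * p), (n.centralBinom : ZMod p) =
      (∑ q ∈ range r, (q.centralBinom : ZMod p)) * ∑ k ∈ range p, (k.centralBinom : ZMod p) := by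
  rw [sum_range_mul_eq_sum_sum, sum_mul]
  refine sum_congr rfl fun q _ => ?_
  rw [mul_sum]
  exact sum_congr rfl fun k hk => cast_centralBinom_mul_add q (mem_range.mp hk)

/-- `binom(2k, k) = (-4)^k binom(-1/2, k)`, and `-1/2 ≡ m (mod p)`. -/
theorem cast_centralBinom_eq_neg_four_pow_mul_choose {m : ℕ} (hpm : p = 2 * m + 1) {k : ℕ}
    (hk : k ≤ m) : (k.centralBinom : ZMod p) = (-4) ^ k * m.choose k := by
  induction k with
  | zero => simp
  | succ k ih =>
    have hp0 : ((2 * m + 1 : ℕ) : ZMod p) = 0 := by rw [← hpm, ZMod.natCast_self]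
    have hk1 : ((k + 1 : ℕ) : ZMod p) ≠ 0 := by
      rw [Ne, ZMod.natCast_eq_zero_iff]
      exact fun h => by have := Nat.le_of_dvd (by omega) h; omega
    have hcb := congrArg (fun n : ℕ => (n : ZMod p)) (succ_mul_centralBinom_succ k)
    have hch := congrArg (fun n : ℕ => (n : ZMod p)) (choose_succ_right_eq m k)
    simp only [cast_mul, cast_add, cast_ofNat, cast_one, cast_sub (by omega : k ≤ m)] at hcb hch
    apply mul_left_cancel₀ hk1
    push_cast at hp0 hk1 ⊢
    rw [ih (by omega)] at hcb
    linear_combination hcb - (-4) ^ (k + 1) * hch + 2 * (-4) ^ k * (m.choose k : ZMod p) * hp0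

theorem sum_range_centralBinom (hp : p ≠ 2) :
    ∑ k ∈ range p, (k.centralBinom : ZMod p) = (-3) ^ (p / 2) := by
  set m := p / 2
  have hpm : p = 2 * m + 1 := by
    have := (Fact.out : p.Prime).eq_two_or_odd.resolve_left hp
    omega
  have htail : ∑ j ∈ range m, ((m + 1 + j).centralBinom : ZMod p) = 0 :=
    sum_eq_zero fun j hj => cast_centralBinom_eq_zero (by have := mem_range.mp hj; omega) (by omega)
  calc ∑ k ∈ range p, (k.centralBinom : ZMod p)
      = ∑ k ∈ range (m + 1), (-4 : ZMod p) ^ k * m.choose k := by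
        rw [show range p = range (m + 1 + m) from congrArg range (by omega),
          sum_range_add, htail, add_zero]
        exact sum_congr rfl fun k hk =>
          cast_centralBinom_eq_neg_four_pow_mul_choose hpm (by have := mem_range.mp hk; omega)
    _ = (-4 + 1) ^ m := by simp [add_pow]
    _ = (-3) ^ m := by norm_num

end CentralBinom

theorem legendreSym_neg_three {p : ℕ} [Fact p.Prime] (hp : p ≠ 2) :
    legendreSym p (-3) = legendreSym 3 p := by
  have : Fact (Nat.Prime 3) := ⟨prime_three⟩
  have hodd : p % 2 = 1 := (Fact.out : p.Prime).eq_two_or_odd.resolve_left hp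
  rw [show (-3 : ℤ) = -1 * 3 by norm_num, legendreSym.mul, legendreSym.at_neg_one hp,
    ZMod.χ₄_eq_neg_one_pow hodd, legendreSym.quadratic_reciprocity' hp (by decide)]
  norm_num

theorem sum_centralBinom_rp_mod_p_general (p : ℕ) (hp : p.Prime) (hp5 : 5 ≤ p)
    (r : ℕ) :
    (p % 3 = 1 → (∑ n ∈ Finset.range (r * p), (Nat.centralBinom n : ZMod p)) =
      ∑ n ∈ Finset.range r, (Nat.centralBinom n : ZMod p)) ∧
    (p % 3 = 2 → (∑ n ∈ Finset.range (r * p), (Nat.centralBinom n : ZMod p)) =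
      -∑ n ∈ Finset.range r, (Nat.centralBinom n : ZMod p)) := by
  have : Fact p.Prime := ⟨hp⟩
  have hsum : ∑ k ∈ range p, (k.centralBinom : ZMod p) = (legendreSym 3 p : ZMod p) := by
    rw [sum_range_centralBinom (by omega), ← legendreSym_neg_three (by omega), legendreSym.eq_pow]
    push_cast; rfl
  rw [sum_range_mul_centralBinom, hsum, legendreSym.mod, ← Int.natCast_mod]
  constructor <;> intro h <;> rw [h]
  · simp [show legendreSym 3 1 = 1 by decide]
  · simp [show legendreSym 3 2 = -1 by decide]

theorem sum_centralBinom_rp_mod_p (p : ℕ) (hp : p.Prime) (hp5 : 5 ≤ p)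
    (r : ℕ) (hr : 0 < r) :
    (p % 3 = 1 → (∑ n ∈ Finset.range (r * p), (Nat.centralBinom n : ZMod p)) =
      ∑ n ∈ Finset.range r, (Nat.centralBinom n : ZMod p)) ∧
    (p % 3 = 2 → (∑ n ∈ Finset.range (r * p), (Nat.centralBinom n : ZMod p)) =
      -∑ n ∈ Finset.range r, (Nat.centralBinom n : ZMod p)) :=
  sum_centralBinom_rp_mod_p_general p hp hp5 r
end

section
/- For every prime p ≥ 5, the sum ∑_{n=0}^{p-1} M_n of Motzkin numbers is congruent to 2 modulo p if p ≡ 1 (mod 4), and congruent to -2 modulo p if p ≡ 3 (mod 4). -/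
/-- The `n`-th Motzkin number, defined by `M_n = ∑_{k=0}^{⌊n/2⌋} C(n, 2k) * Catalan(k)`. -/
def motzkin (n : ℕ) : ℕ :=
  ∑ k ∈ Finset.range (n / 2 + 1), n.choose (2 * k) * catalan k

/-!
Summing `C(n, 2k)` over `n < N` is the hockey stick `C(N, 2k + 1)`, so
`∑_{n<N} M_n = ∑_k C(N, 2k + 1) Catalan(k)`. For `N = p = 2m + 1` prime every binomial
coefficient `C(p, 2k + 1)` with `2k + 1 < p` vanishes mod `p`, leaving `Catalan(m)`.
Finally `(m + 1) Catalan(m) = C(p - 1, m) ≡ (-1)^m` and `2 (m + 1) = p + 1 ≡ 1`,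
so `Catalan(m) ≡ 2 (-1)^m`, and the sign is decided by the parity of `m = (p - 1) / 2`.
-/

open Finset

theorem Nat.sum_range_choose_eq_choose_succ (N k : ℕ) :
    ∑ n ∈ range N, n.choose k = N.choose (k + 1) := by
  induction N with
  | zero => simp
  | succ N ih => rw [sum_range_succ, ih, Nat.choose_succ_succ', add_comm]

theorem ZMod.natCast_choose_eq_neg_one_pow {n j : ℕ} (hp : (n + 1).Prime) (hj : j ≤ n) :
    (n.choose j : ZMod (n + 1)) = (-1) ^ j := by
  induction j with
  | zero => simp
  | succ j ih =>
    have hvanish : ((n + 1).choose (j + 1) : ZMod (n + 1)) = 0 :=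
      (ZMod.natCast_eq_zero_iff _ _).2 (hp.dvd_choose_self j.succ_ne_zero (by omega))
    rw [Nat.choose_succ_succ', Nat.cast_add, ih (by omega)] at hvanish
    rw [pow_succ]
    linear_combination hvanish

theorem motzkin_eq_sum_range {n N : ℕ} (hn : n < N) :
    motzkin n = ∑ k ∈ range N, n.choose (2 * k) * catalan k := by
  refine sum_subset (fun k hk => ?_) (fun k _ hk => ?_)
  · simp only [mem_range] at hk ⊢
    omega
  · simp only [mem_range, not_lt] at hk
    rw [Nat.choose_eq_zero_of_lt (by omega), zero_mul]

theorem sum_range_motzkin (N : ℕ) :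
    ∑ n ∈ range N, motzkin n = ∑ k ∈ range N, N.choose (2 * k + 1) * catalan k := by
  rw [sum_congr rfl fun n hn => motzkin_eq_sum_range (mem_range.1 hn), sum_comm]
  simp only [← sum_mul, Nat.sum_range_choose_eq_choose_succ]

theorem sum_range_motzkin_cast_of_prime {m : ℕ} (hp : (2 * m + 1).Prime) :
    ∑ n ∈ range (2 * m + 1), (motzkin n : ZMod (2 * m + 1)) = catalan m := by
  rw [← Nat.cast_sum, sum_range_motzkin, Nat.cast_sum,
    sum_eq_single_of_mem m (mem_range.2 (by omega)), Nat.choose_self, one_mul]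
  intro k _ hkm
  rcases lt_or_gt_of_ne hkm with hk | hk
  · rw [Nat.cast_mul, (ZMod.natCast_eq_zero_iff _ _).2
      (hp.dvd_choose_self (by omega) (by omega)), zero_mul]
  · rw [Nat.choose_eq_zero_of_lt (by omega), zero_mul, Nat.cast_zero]

theorem ZMod.natCast_catalan_of_prime {m : ℕ} (hp : (2 * m + 1).Prime) :
    (catalan m : ZMod (2 * m + 1)) = 2 * (-1) ^ m := by
  have hcentral : ((m + 1 : ℕ) : ZMod (2 * m + 1)) * catalan m = (-1) ^ m := by
    rw [← Nat.cast_mul, succ_mul_catalan_eq_centralBinom, Nat.centralBinom]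
    exact ZMod.natCast_choose_eq_neg_one_pow hp (by omega)
  have htwo : (2 : ZMod (2 * m + 1)) * (m + 1 : ℕ) = 1 := by
    have hzero : ((2 * m + 1 : ℕ) : ZMod (2 * m + 1)) = 0 := ZMod.natCast_self _
    push_cast at hzero ⊢
    linear_combination hzero
  rw [← hcentral, ← mul_assoc, htwo, one_mul]

theorem sum_motzkin_mod_p_general (p : ℕ) (hp : p.Prime) :
    (p % 4 = 1 → (∑ n ∈ Finset.range p, (motzkin n : ZMod p)) = 2) ∧
    (p % 4 = 3 → (∑ n ∈ Finset.range p, (motzkin n : ZMod p)) = -2) := by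
  rcases hp.eq_two_or_odd' with rfl | ⟨m, rfl⟩
  · omega
  rw [sum_range_motzkin_cast_of_prime hp, ZMod.natCast_catalan_of_prime hp]
  refine ⟨fun h => ?_, fun h => ?_⟩
  · rw [(Nat.even_iff.2 (by omega) : Even m).neg_one_pow, mul_one]
  · rw [(Nat.odd_iff.2 (by omega) : Odd m).neg_one_pow, mul_neg_one]

theorem sum_motzkin_mod_p (p : ℕ) (hp : p.Prime) (hp5 : 5 ≤ p) :
    (p % 4 = 1 → (∑ n ∈ Finset.range p, (motzkin n : ZMod p)) = 2) ∧
    (p % 4 = 3 → (∑ n ∈ Finset.range p, (motzkin n : ZMod p)) = -2) :=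
  sum_motzkin_mod_p_general p hp
end

section
/- For every prime p ≥ 5 and every positive integer r, the sum ∑_{n=0}^{rp-1} M_n of Motzkin numbers is congruent to 2·δ_r modulo p if p ≡ 1 (mod 4), and congruent to -2·δ_r modulo p if p ≡ 3 (mod 4), where δ_r = ∑_{n=0}^{r-1} T_n is the r-th partial sum of the central trinomial coefficients. -/
open Polynomial Finset

/-- The `n`-th central trinomial coefficient: the coefficient of `x^n` in `(1 + x + x^2)^n`. -/
noncomputable def centralTrinomial (n : ℕ) : ℤ :=
  ((1 + Polynomial.X + Polynomial.X ^ 2 : Polynomial ℤ) ^ n).coeff n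


lemma catalan_int (k : ℕ) :
    (catalan k : ℤ) = (2*k).choose k - (2*k).choose (k+1) := by
  have h1 : (k + 1) * catalan k = (2*k).choose k := by
    rw [succ_mul_catalan_eq_centralBinom]; rfl
  have h2 : (2*k+1) * (2*k).choose k = (2*k+1).choose (k+1) * (k+1) :=
    Nat.add_one_mul_choose_eq (2*k) k
  have h3 : (2*k+1).choose (k+1) = (2*k).choose k + (2*k).choose (k+1) :=
    Nat.choose_succ_succ (2*k) k
  have h4 : (k+1) * (2*k).choose (k+1) = k * (2*k).choose k := by
    have := h2; rw [h3] at this; nlinarith [this]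
  have hk : ((k:ℤ) + 1) ≠ 0 := by positivity
  apply mul_left_cancel₀ hk
  have h1' : ((k:ℤ) + 1) * (catalan k : ℤ) = ((2*k).choose k : ℤ) := by exact_mod_cast h1
  have h4' : ((k:ℤ)+1) * ((2*k).choose (k+1) : ℤ) = k * ((2*k).choose k : ℤ) := by exact_mod_cast h4
  rw [h1']; ring_nf; ring_nf at h4'; linarith [h4']

lemma coeff_trinom_pow (n m : ℕ) :
    ((1 + X + X^2 : ℤ[X])^n).coeff m
      = ∑ j ∈ range (n+1),
          (if 2*(n-j) ≤ m then ((j.choose (m - 2*(n-j)) : ℤ)) else 0) * (n.choose j) := by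
  have hF : (1 + X + X^2 : ℤ[X]) = (1 + X) + X^2 := by ring
  rw [hF, add_pow, finset_sum_coeff]
  refine Finset.sum_congr rfl fun j hj => ?_
  rw [← pow_mul, (map_natCast (C : ℤ →+* ℤ[X]) (n.choose j)).symm,
    coeff_mul_C, coeff_mul_X_pow']
  congr 1
  split_ifs with h
  · rw [coeff_one_add_X_pow]
  · rfl

lemma coeff_trinom_pow' (n m : ℕ) :
    ((1 + X + X^2 : ℤ[X])^n).coeff m
      = ∑ k ∈ range (n+1),
          (if 2*k ≤ m then (((n-k).choose (m - 2*k) : ℤ)) else 0) * (n.choose (n-k)) := by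
  rw [coeff_trinom_pow, ← Finset.sum_range_reflect]
  refine Finset.sum_congr rfl fun k hk => ?_
  rw [mem_range] at hk
  congr 2 <;> rw [show n + 1 - 1 - k = n - k from by omega] <;>
    rw [show n - (n - k) = k from by omega]

lemma term_identity (n k : ℕ) (hn : 1 ≤ n) (hk : k < n) :
    ((if 2*k ≤ n then (((n-k).choose (n - 2*k) : ℤ)) else 0) * (n.choose (n-k)))
      - ((if 2*(k+1) ≤ n+2 then (((n-(k+1)).choose (n+2 - 2*(k+1)) : ℤ)) else 0)
          * (n.choose (n-(k+1))))
    = if 2*k ≤ n then ((n.choose (2*k) : ℤ)) * catalan k else 0 := by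
  by_cases h : 2*k ≤ n
  · rw [if_pos h, if_pos (by omega : 2*(k+1) ≤ n+2), if_pos h]
    have e1 : n.choose (n-k) = n.choose k := Nat.choose_symm (by omega)
    have e2 : n.choose (n-(k+1)) = n.choose (k+1) := Nat.choose_symm (by omega)
    have e3 : (n-k).choose (n-2*k) = (n-k).choose k := by
      rw [show n - 2*k = (n-k) - k from by omega]; exact Nat.choose_symm (by omega)
    have e4 : n+2 - 2*(k+1) = n - 2*k := by omega
    have m1 := Nat.choose_mul (n := n) (show k ≤ 2*k by omega)
    rw [show 2*k - k = k from by omega] at m1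
    rcases Nat.eq_zero_or_pos k with rfl | hk1
    · have z : (n-(0+1)).choose (n+2-2*(0+1)) = 0 := Nat.choose_eq_zero_of_lt (by omega)
      rw [z]
      simp [Nat.choose_self]
    · have m2 := Nat.choose_mul (n := n) (show k+1 ≤ 2*k by omega)
      have e5 : (n-(k+1)).choose (n+2-2*(k+1)) = (n-(k+1)).choose (2*k-(k+1)) := by
        rw [e4, show n - 2*k = (n-(k+1)) - (2*k-(k+1)) from by omega]
        exact Nat.choose_symm (by omega)
      rw [e1, e2, e3, e5, catalan_int]
      have m1' : (n.choose (2*k) : ℤ) * (2*k).choose k = n.choose k * (n-k).choose k := by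
        exact_mod_cast m1
      have m2' : (n.choose (2*k) : ℤ) * (2*k).choose (k+1)
          = n.choose (k+1) * (n-(k+1)).choose (2*k-(k+1)) := by exact_mod_cast m2
      linear_combination m2' - m1'
  · rw [if_neg h, if_neg (by omega : ¬ 2*(k+1) ≤ n+2), if_neg h]; ring

lemma motzkin_int (n : ℕ) :
    (motzkin n : ℤ) = ((1 + X + X^2 : ℤ[X])^n).coeff n
      - ((1 + X + X^2 : ℤ[X])^n).coeff (n+2) := by
  rcases Nat.eq_zero_or_pos n with rfl | hn
  · simp [motzkin, Polynomial.coeff_one]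
  have hM : (motzkin n : ℤ)
      = ∑ k ∈ range (n+1), (if 2*k ≤ n then ((n.choose (2*k) : ℤ)) * catalan k else 0) := by
    rw [motzkin, Nat.cast_sum]
    rw [← Finset.sum_subset (Finset.range_subset_range.mpr (by omega : n/2+1 ≤ n+1))
      (fun x _ hx => by
        rw [if_neg]; rw [mem_range, not_lt] at hx; omega)]
    refine Finset.sum_congr rfl fun k hk => ?_
    rw [mem_range] at hk
    rw [if_pos (by omega), Nat.cast_mul]
  rw [hM, coeff_trinom_pow' n n, coeff_trinom_pow' n (n+2)]
  rw [Finset.sum_range_succ (fun k => (if 2*k ≤ n then ((n.choose (2*k) : ℤ)) * catalan k else 0)) n,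
    Finset.sum_range_succ (fun k => (if 2*k ≤ n then (((n-k).choose (n - 2*k) : ℤ)) else 0) * (n.choose (n-k))) n,
    Finset.sum_range_succ' (fun k => (if 2*k ≤ n+2 then (((n-k).choose (n+2 - 2*k) : ℤ)) else 0) * (n.choose (n-k))) n]
  have hA : (if 2*n ≤ n then (((n-n).choose (n - 2*n) : ℤ)) else 0) * (n.choose (n-n)) = 0 := by
    rw [if_neg (by omega)]; ring
  have hB : (if 2*0 ≤ n+2 then (((n-0).choose (n+2 - 2*0) : ℤ)) else 0) * (n.choose (n-0)) = 0 := by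
    rw [if_pos (by omega), Nat.choose_eq_zero_of_lt (by omega)]; simp
  have hMn : (if 2*n ≤ n then ((n.choose (2*n) : ℤ)) * catalan n else 0) = 0 := by
    rw [if_neg (by omega)]
  rw [hA, hB, hMn, add_zero, add_zero, add_zero]
  rw [← Finset.sum_sub_distrib]
  exact (Finset.sum_congr rfl fun k hk =>
    (term_identity n k hn (mem_range.mp hk)).symm)
section ModP
variable {p : ℕ} [hpI : Fact p.Prime]



lemma pow_p_eq_expand (g : (ZMod p)[X]) : g ^ p = expand (ZMod p) p g := by
  have h := Polynomial.map_frobenius_expand p g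
  rw [ZMod.frobenius_zmod, Polynomial.map_id] at h
  exact h.symm

lemma pow_mul_p_eq_expand (q : ℕ) (g : (ZMod p)[X]) :
    g ^ (q * p) = expand (ZMod p) p (g ^ q) := by
  rw [map_pow, ← pow_p_eq_expand, ← pow_mul, mul_comm]

lemma coeff_expand_mul_poly (g h : (ZMod p)[X]) (m : ℕ) :
    (expand (ZMod p) p g * h).coeff m
      = ∑ i ∈ range (m / p + 1), g.coeff i * h.coeff (m - i * p) := by
  have hp0 : 0 < p := hpI.out.pos
  rw [coeff_mul, Finset.Nat.sum_antidiagonal_eq_sum_range_succ_mk]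
  have : ∀ a ∈ range (m+1),
      (expand (ZMod p) p g).coeff a * h.coeff (m - a)
        = if p ∣ a then g.coeff (a/p) * h.coeff (m - a) else 0 := by
    intro a _
    rw [Polynomial.coeff_expand hp0]
    split_ifs <;> simp
  rw [Finset.sum_congr rfl this, Finset.sum_ite, Finset.sum_const_zero, add_zero]
  refine Finset.sum_nbij' (fun a => a / p) (fun i => i * p) ?_ ?_ ?_ ?_ ?_
  · intro a ha
    simp only [Finset.mem_filter, Finset.mem_range] at ha
    have h2 : a / p ≤ m / p := Nat.div_le_div_right (by omega)
    exact Finset.mem_range.mpr (Nat.lt_succ_of_le h2)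
  · intro i hi
    rw [Finset.mem_range] at hi
    simp only [Finset.mem_filter, Finset.mem_range]
    constructor
    · have : i * p ≤ (m / p) * p := Nat.mul_le_mul_right _ (by omega)
      have := Nat.div_mul_le_self m p
      omega
    · exact dvd_mul_left p i
  · intro a ha
    simp only [Finset.mem_filter] at ha
    exact Nat.div_mul_cancel ha.2
  · intro i _
    exact Nat.mul_div_cancel _ hp0
  · intro a ha
    simp only [Finset.mem_filter] at ha
    rw [Nat.div_mul_cancel ha.2]

lemma natDegree_trinom_pow (s : ℕ) :
    ((1 + X + X^2 : (ZMod p)[X]) ^ s).natDegree ≤ 2 * s := by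
  refine (Polynomial.natDegree_pow_le).trans ?_
  have : (1 + X + X^2 : (ZMod p)[X]).natDegree ≤ 2 := by
    refine (Polynomial.natDegree_add_le _ _).trans ?_
    simp only [Polynomial.natDegree_X_pow]
    refine max_le ((Polynomial.natDegree_add_le _ _).trans ?_) le_rfl
    simp
  calc s * (1 + X + X^2 : (ZMod p)[X]).natDegree ≤ s * 2 := Nat.mul_le_mul_left _ this
    _ = 2 * s := by ring

lemma coeff_trinom_pow_eq_zero {s j : ℕ} (h : 2 * s < j) :
    ((1 + X + X^2 : (ZMod p)[X]) ^ s).coeff j = 0 :=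
  Polynomial.coeff_eq_zero_of_natDegree_lt (lt_of_le_of_lt (natDegree_trinom_pow s) h)

lemma coeff_block (q s m : ℕ) :
    ((1 + X + X^2 : (ZMod p)[X]) ^ (q * p + s)).coeff m
      = ∑ i ∈ range (m / p + 1),
          ((1 + X + X^2 : (ZMod p)[X]) ^ q).coeff i
            * ((1 + X + X^2 : (ZMod p)[X]) ^ s).coeff (m - i * p) := by
  rw [pow_add, pow_mul_p_eq_expand, coeff_expand_mul_poly]

lemma coeff_single (q s t : ℕ) (ht : t < p) (h : 2*s < p + t) :
    ((1 + X + X^2 : (ZMod p)[X]) ^ (q*p+s)).coeff (q*p+t)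
      = ((1 + X + X^2 : (ZMod p)[X]) ^ q).coeff q
          * ((1 + X + X^2 : (ZMod p)[X]) ^ s).coeff t := by
  have hp0 : 0 < p := hpI.out.pos
  rw [coeff_block]
  have hdiv : (q*p+t)/p = q := by
    rw [add_comm, Nat.add_mul_div_right _ _ hp0, Nat.div_eq_of_lt ht, zero_add]
  rw [hdiv]
  rw [Finset.sum_eq_single_of_mem q (Finset.self_mem_range_succ q)]
  · rw [show q*p + t - q*p = t from by omega]
  · intro b hb hbq
    rw [Finset.mem_range] at hb
    have hb' : b < q := by omega
    have h1 : (b+1)*p ≤ q*p := Nat.mul_le_mul_right p (by omega)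
    have h2 : (b+1)*p = b*p + p := by ring
    rw [show ((1 + X + X^2 : (ZMod p)[X]) ^ s).coeff (q*p+t-b*p) = 0 from
      coeff_trinom_pow_eq_zero (by omega), mul_zero]

lemma coeff_double (q s t : ℕ) (hs : s < p) (hpt : p ≤ t) (ht : t < 2*p) :
    ((1 + X + X^2 : (ZMod p)[X]) ^ (q*p+s)).coeff (q*p+t)
      = ((1 + X + X^2 : (ZMod p)[X]) ^ q).coeff q
          * ((1 + X + X^2 : (ZMod p)[X]) ^ s).coeff t
        + ((1 + X + X^2 : (ZMod p)[X]) ^ q).coeff (q+1)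
          * ((1 + X + X^2 : (ZMod p)[X]) ^ s).coeff (t - p) := by
  have hp0 : 0 < p := hpI.out.pos
  rw [coeff_block]
  have hdiv : (q*p+t)/p = q + 1 := by
    rw [add_comm, Nat.add_mul_div_right _ _ hp0, Nat.div_eq_sub_div hp0 hpt,
      Nat.div_eq_of_lt (by omega)]
    omega
  rw [hdiv, Finset.sum_range_succ]
  have h3 : (q+1)*p = q*p + p := by ring
  rw [show q*p + t - (q+1)*p = t - p from by omega]
  congr 1
  rw [Finset.sum_eq_single_of_mem q (Finset.self_mem_range_succ q)]
  · rw [show q*p + t - q*p = t from by omega]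
  · intro b hb hbq
    rw [Finset.mem_range] at hb
    have hb' : b < q := by omega
    have h1 : (b+2)*p ≤ (q+1)*p := Nat.mul_le_mul_right p (by omega)
    have h2 : (b+2)*p = b*p + p + p := by ring
    have h3 : (q+1)*p = q*p + p := by ring
    rw [show ((1 + X + X^2 : (ZMod p)[X]) ^ s).coeff (q*p+t-b*p) = 0 from
      coeff_trinom_pow_eq_zero (by omega), mul_zero]

lemma coeff_zero_trinom_pow (n : ℕ) :
    ((1 + X + X^2 : (ZMod p)[X]) ^ n).coeff 0 = 1 := by
  rw [← Polynomial.constantCoeff_apply, map_pow, Polynomial.constantCoeff_apply]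
  simp [coeff_one]

lemma coeff_one_trinom_pow (n : ℕ) :
    ((1 + X + X^2 : (ZMod p)[X]) ^ n).coeff 1 = (n : ZMod p) := by
  induction n with
  | zero => simp [coeff_one]
  | succ n ih =>
    rw [pow_succ, Polynomial.coeff_mul, Finset.Nat.sum_antidiagonal_eq_sum_range_succ_mk]
    rw [Finset.sum_range_succ, Finset.sum_range_one]
    simp only [Nat.sub_zero, Nat.sub_self]
    rw [ih, coeff_zero_trinom_pow]
    have c1 : (1 + X + X^2 : (ZMod p)[X]).coeff 1 = 1 := by
      simp [coeff_one]
    have c0 : (1 + X + X^2 : (ZMod p)[X]).coeff 0 = 1 := by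
      simp [coeff_one]
    rw [c1, c0]
    push_cast
    ring
lemma block_sum (hp5 : 5 ≤ p) (q : ℕ) :
    ∑ s ∈ range p, (((1 + X + X^2 : (ZMod p)[X])^(q*p+s)).coeff (q*p+s)
        - ((1 + X + X^2 : (ZMod p)[X])^(q*p+s)).coeff (q*p+s+2))
      = ((1 + X + X^2 : (ZMod p)[X])^q).coeff q
          * ∑ s ∈ range p, (((1 + X + X^2 : (ZMod p)[X])^s).coeff s
              - ((1 + X + X^2 : (ZMod p)[X])^s).coeff (s+2)) := by
  obtain ⟨u, rfl⟩ : ∃ u, p = u + 2 := ⟨p - 2, by omega⟩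
  rw [eq_comm, ← sub_eq_zero, Finset.mul_sum, ← Finset.sum_sub_distrib]
  rw [Finset.sum_range_succ, Finset.sum_range_succ]
  have hzero : ∀ s ∈ range u,
      ((1 + X + X^2 : (ZMod (u+2))[X])^q).coeff q
          * (((1 + X + X^2 : (ZMod (u+2))[X])^s).coeff s
              - ((1 + X + X^2 : (ZMod (u+2))[X])^s).coeff (s+2))
        - (((1 + X + X^2 : (ZMod (u+2))[X])^(q*(u+2)+s)).coeff (q*(u+2)+s)
            - ((1 + X + X^2 : (ZMod (u+2))[X])^(q*(u+2)+s)).coeff (q*(u+2)+s+2)) = 0 := by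
    intro s hs
    rw [Finset.mem_range] at hs
    rw [coeff_single q s s (by omega) (by omega),
      show q*(u+2)+s+2 = q*(u+2)+(s+2) from by ring,
      coeff_single q s (s+2) (by omega) (by omega)]
    ring
  rw [Finset.sum_congr rfl hzero, Finset.sum_const_zero, zero_add]
  -- s = u term
  rw [coeff_single q u u (by omega) (by omega),
    show q*(u+2)+u+2 = q*(u+2)+(u+2) from by ring,
    coeff_double q u (u+2) (by omega) (by omega) (by omega),
    Nat.sub_self, coeff_zero_trinom_pow]
  -- s = u+1 term
  rw [coeff_single q (u+1) (u+1) (by omega) (by omega),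
    show q*(u+2)+(u+1)+2 = q*(u+2)+(u+3) from by ring,
    coeff_double q (u+1) (u+3) (by omega) (by omega) (by omega),
    show u+3-(u+2) = 1 from by omega, coeff_one_trinom_pow]
  have hm1 : ((u+1 : ℕ) : ZMod (u+2)) = -1 := by
    have h0 : ((u+2 : ℕ) : ZMod (u+2)) = 0 := ZMod.natCast_self (u+2)
    push_cast at h0 ⊢
    linear_combination h0
  push_cast [hm1]
  ring

lemma choose_p_sub_one (m : ℕ) (hm : m < p) :
    (((p-1).choose m : ℕ) : ZMod p) = (-1)^m := by
  induction m with
  | zero => simp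
  | succ m ih =>
    have hpas : (p-1).choose m + (p-1).choose (m+1) = p.choose (m+1) := by
      have h := Nat.choose_succ_succ (p-1) m
      simp only [Nat.succ_eq_add_one] at h
      rw [show p - 1 + 1 = p from by omega] at h
      omega
    have hdvd : (p : ℕ) ∣ p.choose (m+1) :=
      Nat.Prime.dvd_choose_self hpI.out (by omega) (by omega)
    have hz : ((p.choose (m+1) : ℕ) : ZMod p) = 0 :=
      (ZMod.natCast_eq_zero_iff _ _).mpr hdvd
    have := congrArg (fun k : ℕ => (k : ZMod p)) hpas
    push_cast at this
    rw [ih (by omega)] at this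
    rw [hz] at this
    rw [pow_succ]
    linear_combination this

lemma sum_motzkin_p (hp5 : 5 ≤ p) :
    ∑ s ∈ range p, ((∑ k ∈ Finset.range (s / 2 + 1), s.choose (2 * k) * catalan k : ℕ)
        : ZMod p)
      = 2 * (-1)^((p-1)/2) := by
  have hp0 : 0 < p := hpI.out.pos
  have hodd : p % 2 = 1 := by
    rcases Nat.Prime.eq_two_or_odd hpI.out with h | h
    · omega
    · exact h
  -- rewrite each motzkin as a full sum over range p with an if
  have step1 : ∀ s ∈ range p,
      ((∑ k ∈ Finset.range (s / 2 + 1), s.choose (2 * k) * catalan k : ℕ) : ZMod p)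
        = ∑ k ∈ range p, ((s.choose (2*k) : ZMod p)) * (catalan k : ZMod p) := by
    intro s hs
    rw [Finset.mem_range] at hs
    push_cast
    rw [← Finset.sum_subset (Finset.range_subset_range.mpr (by omega : s/2+1 ≤ p))
      (fun x _ hx => by
        rw [Finset.mem_range, not_lt] at hx
        rw [Nat.choose_eq_zero_of_lt (by omega), Nat.cast_zero, zero_mul])]
  rw [Finset.sum_congr rfl step1, Finset.sum_comm]
  -- inner sums: hockey stick
  have step2 : ∀ k : ℕ, ∑ s ∈ range p, (s.choose (2*k) : ZMod p)
      = ((p.choose (2*k+1) : ℕ) : ZMod p) := by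
    intro k
    have : ∑ s ∈ range p, s.choose (2*k) = p.choose (2*k+1) := by
      rw [← Finset.sum_subset
        (show Icc (2*k) (p-1) ⊆ range p from fun x hx => by
          rw [Finset.mem_Icc] at hx; rw [Finset.mem_range]; omega)
        (fun x hx1 hx2 => by
          rw [Finset.mem_range] at hx1
          rw [Finset.mem_Icc] at hx2
          exact Nat.choose_eq_zero_of_lt (by omega))]
      rw [Nat.sum_Icc_choose, show p - 1 + 1 = p from by omega]
    rw [← this]
    push_cast
    rfl
  have step2' : ∀ k ∈ range p, (∑ s ∈ range p, (s.choose (2*k) : ZMod p) * (catalan k : ZMod p))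
      = (if k = (p-1)/2 then (catalan k : ZMod p) else 0) := by
    intro k _
    rw [← Finset.sum_mul, step2 k]
    by_cases hk : k = (p-1)/2
    · subst hk
      rw [if_pos rfl, show 2*((p-1)/2)+1 = p from by omega, Nat.choose_self]
      push_cast; ring
    · rw [if_neg hk]
      rcases lt_or_gt_of_ne (fun h => hk h) with h | h
      swap
      · rw [Nat.choose_eq_zero_of_lt (by omega), Nat.cast_zero, zero_mul]
      · rw [(ZMod.natCast_eq_zero_iff _ _).mpr
          (Nat.Prime.dvd_choose_self hpI.out (by omega) (by omega)), zero_mul]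
  rw [Finset.sum_congr rfl step2', Finset.sum_ite_eq' (range p) ((p-1)/2)]
  rw [if_pos (Finset.mem_range.mpr (by omega))]
  -- catalan ((p-1)/2) = 2 * (-1)^((p-1)/2)
  set m := (p-1)/2 with hm
  have hcb : (m + 1) * catalan m = (2*m).choose m := by
    rw [succ_mul_catalan_eq_centralBinom]; rfl
  have h2m : 2*m = p - 1 := by omega
  have hch : (((2*m).choose m : ℕ) : ZMod p) = (-1)^m := by
    rw [h2m]; exact choose_p_sub_one m (by omega)
  have hcast : ((m+1 : ℕ) : ZMod p) * (catalan m : ZMod p) = (-1)^m := by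
    have h := congrArg (fun k : ℕ => (k : ZMod p)) hcb
    push_cast at h
    rw [hch] at h
    push_cast
    linear_combination h
  have h2 : ((2*(m+1) : ℕ) : ZMod p) = 1 := by
    rw [show 2*(m+1) = p + 1 from by omega]
    push_cast
    simp
  calc (catalan m : ZMod p) = ((2*(m+1) : ℕ) : ZMod p) * (catalan m : ZMod p) := by
        rw [h2, one_mul]
    _ = 2 * (((m+1 : ℕ) : ZMod p) * (catalan m : ZMod p)) := by push_cast; ring
    _ = 2 * (-1)^m := by rw [hcast]

lemma cast_coeff (n m : ℕ) :
    ((((1 + X + X^2 : ℤ[X])^n).coeff m : ℤ) : ZMod p)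
      = ((1 + X + X^2 : (ZMod p)[X])^n).coeff m := by
  have h : ((1 + X + X^2 : (ZMod p)[X])^n)
      = Polynomial.map (Int.castRingHom (ZMod p)) ((1 + X + X^2 : ℤ[X])^n) := by
    simp [Polynomial.map_pow]
  rw [h, Polynomial.coeff_map]
  rfl

lemma motzkin_zmod (n : ℕ) :
    ((motzkin n : ℕ) : ZMod p)
      = ((1 + X + X^2 : (ZMod p)[X])^n).coeff n
        - ((1 + X + X^2 : (ZMod p)[X])^n).coeff (n+2) := by
  rw [← cast_coeff n n, ← cast_coeff n (n+2), ← Int.cast_sub, ← motzkin_int]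
  push_cast
  ring

lemma sum_decompose (f : ℕ → ZMod p) (r : ℕ) :
    ∑ n ∈ range (r*p), f n = ∑ q ∈ range r, ∑ s ∈ range p, f (q*p+s) := by
  induction r with
  | zero => simp
  | succ r ih =>
    rw [show (r+1)*p = r*p + p from by ring, Finset.sum_range_add, ih,
      Finset.sum_range_succ]

lemma main_key (hp5 : 5 ≤ p) (r : ℕ) :
    ∑ n ∈ Finset.range (r * p), (motzkin n : ZMod p)
      = (∑ n ∈ Finset.range r, (centralTrinomial n : ZMod p)) * (2 * (-1)^((p-1)/2)) := by
  have e1 : ∑ n ∈ Finset.range (r * p), (motzkin n : ZMod p)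
      = ∑ n ∈ Finset.range (r * p),
          (((1 + X + X^2 : (ZMod p)[X])^n).coeff n
            - ((1 + X + X^2 : (ZMod p)[X])^n).coeff (n+2)) :=
    Finset.sum_congr rfl fun n _ => motzkin_zmod n
  have e2 : ∑ s ∈ range p, (((1 + X + X^2 : (ZMod p)[X])^s).coeff s
        - ((1 + X + X^2 : (ZMod p)[X])^s).coeff (s+2))
      = 2 * (-1)^((p-1)/2) := by
    have := sum_motzkin_p (p := p) hp5
    rw [← this]
    exact Finset.sum_congr rfl fun s _ => (motzkin_zmod s).symm
  rw [e1, sum_decompose, Finset.sum_congr rfl (fun q _ => block_sum hp5 q)]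
  rw [← Finset.sum_mul, e2]
  congr 1
  refine Finset.sum_congr rfl fun q _ => ?_
  rw [centralTrinomial, ← cast_coeff q q]

end ModP

theorem sum_motzkin_rp_mod_p (p : ℕ) (hp : p.Prime) (hp5 : 5 ≤ p)
    (r : ℕ) (hr : 0 < r) :
    (p % 4 = 1 → (∑ n ∈ Finset.range (r * p), (motzkin n : ZMod p)) =
      2 * ∑ n ∈ Finset.range r, (centralTrinomial n : ZMod p)) ∧
    (p % 4 = 3 → (∑ n ∈ Finset.range (r * p), (motzkin n : ZMod p)) =
      -(2 * ∑ n ∈ Finset.range r, (centralTrinomial n : ZMod p))) := by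
  haveI : Fact p.Prime := ⟨hp⟩
  have key := main_key (p := p) hp5 r
  constructor
  · intro h1
    have he : (p-1)/2 % 2 = 0 := by omega
    have : ((-1 : ZMod p))^((p-1)/2) = 1 := Even.neg_one_pow (Nat.even_iff.mpr he)
    rw [key, this]
    ring
  · intro h3
    have ho : (p-1)/2 % 2 = 1 := by omega
    have : ((-1 : ZMod p))^((p-1)/2) = -1 := Odd.neg_one_pow (Nat.odd_iff.mpr ho)
    rw [key, this]
    ring
end

section
/- For any prime p > 2, the triple sum ∑_{m1=0}^{p-1} ∑_{m2=0}^{p-1} ∑_{m3=0}^{p-1} (m1+m2+m3)! / (m1! · m2! · m3!) is congruent to 1 modulo p. -/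
/-!
Writing the trinomial as `C(a+b+c, a+b) * C(a+b, a)`, the hockey-stick identity turns the sum over
`c < p` into `C(a+b+p, a+b+1) * C(a+b, a)`. For `a, b < p`, Lucas's theorem makes the first factor
`1` modulo `p` when `a + b = p - 1` and `0` otherwise. What survives is `∑ a, C(p-1, a) = 2^(p-1)`,
which is `1` by Fermat's little theorem since `p ≠ 2`.
-/

open Finset

theorem Nat.multinomial_univ_three_eq_choose_mul_choose (a b c : ℕ) :
    Nat.multinomial univ ![a, b, c] = (a + b + c).choose (a + b) * (a + b).choose a := by
  rw [show (univ : Finset (Fin 3)) = {2, 0, 1} by decide, Nat.multinomial_insert (by decide),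
    Nat.binomial_eq_choose (by decide)]
  simp [add_comm c, Nat.choose_symm_add]

theorem Nat.sum_range_add_choose_left (k m : ℕ) :
    ∑ i ∈ range m, (k + i).choose k = (k + m).choose (k + 1) := by
  cases m with
  | zero => simp
  | succ n =>
    rw [show k + (n + 1) = n + k + 1 by ring, ← Nat.sum_range_add_choose]
    simp only [add_comm k]

theorem ZMod.natCast_choose_eq_zero_of_mod_lt {p n k : ℕ} [Fact p.Prime] (h : n % p < k % p) :
    (n.choose k : ZMod p) = 0 := by
  rw [← Int.cast_natCast, (ZMod.intCast_eq_intCast_iff _ _ _).2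
    Choose.choose_modEq_choose_mod_mul_choose_div, Nat.choose_eq_zero_of_lt h]
  simp

theorem ZMod.natCast_choose_two_mul_sub_one (p : ℕ) [hp : Fact p.Prime] :
    ((2 * p - 1).choose p : ZMod p) = 1 := by
  have hp1 := hp.out.one_lt
  rw [← Int.cast_natCast, (ZMod.intCast_eq_intCast_iff _ _ _).2
    Choose.choose_modEq_choose_mod_mul_choose_div]
  have h1 : (2 * p - 1) % p = p - 1 := by
    rw [show 2 * p - 1 = (p - 1) + p * 1 by omega, Nat.add_mul_mod_self_left]
    exact Nat.mod_eq_of_lt (by omega)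
  have h2 : (2 * p - 1) / p = 1 := by
    rw [show 2 * p - 1 = (p - 1) + p * 1 by omega, Nat.add_mul_div_left _ _ (by omega),
      Nat.div_eq_of_lt (by omega)]
  simp [h1, h2, Nat.div_self (by omega : 0 < p)]

theorem ZMod.natCast_choose_add_prime_succ {p k : ℕ} [hp : Fact p.Prime] (hk : k ≤ 2 * p - 2) :
    ((k + p).choose (k + 1) : ZMod p) = if k = p - 1 then 1 else 0 := by
  have hp1 := hp.out.one_lt
  split_ifs with hkp
  · rw [hkp, show p - 1 + p = 2 * p - 1 by omega, Nat.sub_add_cancel hp1.le]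
    exact natCast_choose_two_mul_sub_one p
  apply natCast_choose_eq_zero_of_mod_lt
  rw [Nat.add_mod_right]
  rcases lt_or_ge k p with hlt | hge
  · rw [Nat.mod_eq_of_lt hlt, Nat.mod_eq_of_lt (by omega)]
    omega
  · obtain ⟨r, rfl⟩ := Nat.exists_eq_add_of_le hge
    rw [Nat.add_mod_left, add_assoc, Nat.add_mod_left, Nat.mod_eq_of_lt (by omega),
      Nat.mod_eq_of_lt (by omega)]
    omega

theorem ZMod.sum_range_multinomial_three {p a b : ℕ} [Fact p.Prime] (hab : a + b ≤ 2 * p - 2) :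
    ∑ c ∈ range p, (Nat.multinomial univ ![a, b, c] : ZMod p) =
      if a + b = p - 1 then ((p - 1).choose a : ZMod p) else 0 := by
  simp only [Nat.multinomial_univ_three_eq_choose_mul_choose, Nat.cast_mul, ← sum_mul,
    ← Nat.cast_sum, Nat.sum_range_add_choose_left, natCast_choose_add_prime_succ hab]
  split_ifs with h
  · rw [h, one_mul]
  · rw [zero_mul]

theorem triple_sum_multinomial_mod_p (p : ℕ) (hp : p.Prime) (hp2 : 2 < p) :
    (∑ m1 ∈ Finset.range p, ∑ m2 ∈ Finset.range p, ∑ m3 ∈ Finset.range p,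
      (Nat.multinomial Finset.univ ![m1, m2, m3] : ZMod p)) = 1 := by
  have := Fact.mk hp
  calc _ = ∑ m1 ∈ range p, ∑ m2 ∈ range p,
        if m1 + m2 = p - 1 then ((p - 1).choose m1 : ZMod p) else 0 := by
        refine sum_congr rfl fun m1 hm1 => sum_congr rfl fun m2 hm2 => ?_
        rw [mem_range] at hm1 hm2
        exact ZMod.sum_range_multinomial_three (by omega)
    _ = ∑ m1 ∈ range p, ((p - 1).choose m1 : ZMod p) := by
        refine sum_congr rfl fun m1 hm1 => ?_
        rw [mem_range] at hm1
        rw [sum_eq_single_of_mem (p - 1 - m1) (mem_range.2 (by omega))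
          (fun j _ hj => if_neg (by omega)), if_pos (by omega)]
    _ = 2 ^ (p - 1) := by
        have h := Nat.sum_range_choose (p - 1)
        rw [Nat.sub_add_cancel hp.one_lt.le] at h
        rw [← Nat.cast_sum, h, Nat.cast_pow, Nat.cast_ofNat]
    _ = 1 := ZMod.pow_card_sub_one_eq_one (Ring.two_ne_zero (by rw [ZMod.ringChar_zmod_n]; omega))
end

section
/- For every prime p ≥ 5, the sum ∑_{n=0}^{p-1} C_n of Catalan numbers is congruent to 1 modulo p^2 if p ≡ 1 (mod 3), and congruent to -2 modulo p^2 if p ≡ 2 (mod 3). -/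
/-!
Write `B k = (2k choose k)`. Since `2 C k + B (k + 1) = 4 B k`, we get
`2 ∑_{k<p} C k = 3 ∑_{k<p} B k + 1 - B p`, and `B p ≡ 2 (mod p²)`; so everything reduces to
`∑_{k<p} B k ≡ (p/3) (mod p²)`, where `(·/3)` is the Legendre symbol.

The sums `S d = ∑_{k<n} (2k choose k+d)` satisfy `S d + S (d+1) + S (d+2) = (2n choose n+d+1)`,
and three consecutive values of `(·/3)` cancel, so summation by parts gives
`∑_{k<n} B k = ∑_d (d/3) (2n choose n+d)`. For `n = p` and `d < p`, Vandermonde gives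
`(2p choose p+d) ≡ 2 (p choose d) (mod p²)`, and `∑_{d<p} (d/3) (p choose d) = 0` for odd `p`
by a Pascal induction; only the term `d = p` survives.
-/

open Finset Nat

theorem jacobiSym_three (n : ℕ) :
    jacobiSym n 3 = if n % 3 = 1 then 1 else if n % 3 = 2 then -1 else 0 := by
  rw [jacobiSym.mod_left, show (n : ℤ) % (3 : ℕ) = ((n % 3 : ℕ) : ℤ) by push_cast; rfl]
  have : n % 3 < 3 := Nat.mod_lt _ (by norm_num)
  interval_cases n % 3 <;> norm_num

theorem jacobiSym_three_consecutive_sum_eq_zero (m : ℕ) :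
    jacobiSym m 3 + jacobiSym (m + 1 : ℕ) 3 + jacobiSym (m + 2 : ℕ) 3 = 0 := by
  simp only [jacobiSym_three]
  split_ifs <;> omega

theorem jacobiSym_three_two_mul (m : ℕ) : jacobiSym (2 * m : ℕ) 3 = -jacobiSym m 3 := by
  simp only [jacobiSym_three]
  split_ifs <;> omega

theorem sum_choose_mul_jacobiSym_three (n k : ℕ) :
    ∑ d ∈ range (n + 1), (n.choose d : ℤ) * jacobiSym (k + d : ℕ) 3 =
      (-1) ^ n * jacobiSym (2 * n + k : ℕ) 3 := by
  induction n generalizing k with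
  | zero => simp
  | succ n ih =>
    have pascal := sum_choose_succ_mul (R := ℤ) (fun d _ => jacobiSym (k + d : ℕ) 3) n
    rw [pascal, ih k,
      sum_congr rfl fun i _ => by rw [show k + (i + 1) = k + 1 + i by omega], ih (k + 1)]
    have h := jacobiSym_three_consecutive_sum_eq_zero (2 * n + k)
    rw [show 2 * (n + 1) + k = 2 * n + k + 2 by ring, show 2 * n + (k + 1) = 2 * n + k + 1 by ring]
    linear_combination (-1) ^ n * h

theorem sum_range_three_mul_jacobiSym_mul {S T : ℕ → ℤ}
    (h : ∀ d, S d + S (d + 1) + S (d + 2) = T (d + 1)) (M : ℕ) :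
    ∑ d ∈ range (3 * M), jacobiSym d 3 * T d = S 0 - S (3 * M) := by
  induction M with
  | zero => simp
  | succ M ih =>
    have h0 : 3 * M % 3 = 0 := by omega
    have h1 : (3 * M + 1) % 3 = 1 := by omega
    have h2 : (3 * M + 2) % 3 = 2 := by omega
    have e0 : S (3 * M) + S (3 * M + 1) + S (3 * M + 2) = T (3 * M + 1) := h _
    have e1 : S (3 * M + 1) + S (3 * M + 2) + S (3 * M + 2 + 1) = T (3 * M + 2) := h _
    rw [show 3 * (M + 1) = 3 * M + 2 + 1 by ring, sum_range_succ, sum_range_succ, sum_range_succ,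
      ih, jacobiSym_three, jacobiSym_three, jacobiSym_three]
    simp only [h0, h1, h2]
    norm_num
    linear_combination e1 - e0

theorem choose_two_mul_add_succ_succ (n d : ℕ) :
    (2 * (n + 1)).choose (n + 1 + (d + 1)) =
      (2 * n).choose (n + d) + 2 * (2 * n).choose (n + (d + 1)) + (2 * n).choose (n + (d + 2)) := by
  rw [show 2 * (n + 1) = 2 * n + 1 + 1 by ring, show n + 1 + (d + 1) = n + d + 1 + 1 by ring]
  change _ = _ + 2 * (2 * n).choose (n + d + 1) + (2 * n).choose (n + d + 1 + 1)
  rw [choose_succ_succ' (2 * n + 1), choose_succ_succ' (2 * n) (n + d),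
    choose_succ_succ' (2 * n) (n + d + 1)]
  ring

theorem sum_choose_two_mul_three_consecutive (n d : ℕ) :
    ∑ k ∈ range n, (2 * k).choose (k + d) + ∑ k ∈ range n, (2 * k).choose (k + (d + 1)) +
      ∑ k ∈ range n, (2 * k).choose (k + (d + 2)) = (2 * n).choose (n + (d + 1)) := by
  induction n with
  | zero => simp
  | succ n ih =>
    simp only [sum_range_succ]
    have := choose_two_mul_add_succ_succ n d
    omega

theorem sum_centralBinom_eq_sum_jacobiSym_mul_choose (n : ℕ) :
    ∑ k ∈ range n, (centralBinom k : ℤ) =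
      ∑ d ∈ range (n + 1), jacobiSym d 3 * ((2 * n).choose (n + d) : ℤ) := by
  set S : ℕ → ℤ := fun d => ∑ k ∈ range n, ((2 * k).choose (k + d) : ℤ)
  have hrec : ∀ d, S d + S (d + 1) + S (d + 2) = ((2 * n).choose (n + (d + 1)) : ℤ) := by
    intro d
    simp only [S]
    exact_mod_cast sum_choose_two_mul_three_consecutive n d
  have hvanish : S (3 * (n + 1)) = 0 :=
    sum_eq_zero fun k hk => by rw [choose_eq_zero_of_lt (by simp at hk; omega), Nat.cast_zero]
  have htel := sum_range_three_mul_jacobiSym_mul (T := fun d => ((2 * n).choose (n + d) : ℤ))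
    hrec (n + 1)
  rw [hvanish, sub_zero] at htel
  calc ∑ k ∈ range n, (centralBinom k : ℤ)
      = S 0 := by simp [S, centralBinom_eq_two_mul_choose]
    _ = ∑ d ∈ range (3 * (n + 1)), jacobiSym d 3 * ((2 * n).choose (n + d) : ℤ) := htel.symm
    _ = ∑ d ∈ range (n + 1), jacobiSym d 3 * ((2 * n).choose (n + d) : ℤ) := by
      refine (sum_subset (range_subset_range.2 (by omega)) fun d _ hd => ?_).symm
      rw [choose_eq_zero_of_lt (by simp at hd; omega), Nat.cast_zero, mul_zero]

theorem choose_two_mul_add_modEq {p : ℕ} (hp : p.Prime) {d : ℕ} (hd : d < p) :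
    (2 * p).choose (p + d) ≡ 2 * p.choose d [MOD p ^ 2] := by
  rw [← ZMod.natCast_eq_natCast_iff, two_mul, add_choose_eq]
  have hsub : {(d, p), (p, d)} ⊆ antidiagonal (p + d) := by
    simp [insert_subset_iff, add_comm]
  have hrest : ∀ ij ∈ antidiagonal (p + d), ij ∉ ({(d, p), (p, d)} : Finset (ℕ × ℕ)) →
      ((p.choose ij.1 * p.choose ij.2 : ℕ) : ZMod (p ^ 2)) = 0 := by
    rintro ⟨i, j⟩ hij hne
    simp only [HasAntidiagonal.mem_antidiagonal, mem_insert, mem_singleton, Prod.mk.injEq,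
      not_or] at hij hne
    rcases lt_or_ge p i with hi | hi
    · simp [choose_eq_zero_of_lt hi]
    rcases lt_or_ge p j with hj | hj
    · simp [choose_eq_zero_of_lt hj]
    rw [ZMod.natCast_eq_zero_iff, sq]
    exact mul_dvd_mul (hp.dvd_choose_self (by omega) (by omega))
      (hp.dvd_choose_self (by omega) (by omega))
  rw [Nat.cast_sum, ← sum_subset hsub hrest, sum_pair (by simp; omega)]
  simp only [choose_self]
  push_cast
  ring

theorem two_mul_catalan_add_centralBinom_succ (k : ℕ) :
    2 * catalan k + centralBinom (k + 1) = 4 * centralBinom k := by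
  apply Nat.eq_of_mul_eq_mul_left k.succ_pos
  have h1 := succ_mul_catalan_eq_centralBinom k
  have h2 := succ_mul_centralBinom_succ k
  zify at h1 h2 ⊢
  linear_combination 2 * h1 + h2

theorem two_mul_sum_catalan_add_centralBinom (n : ℕ) :
    2 * ∑ k ∈ range n, catalan k + centralBinom n =
      3 * ∑ k ∈ range n, centralBinom k + 1 := by
  induction n with
  | zero => simp
  | succ n ih =>
    simp only [sum_range_succ]
    have := two_mul_catalan_add_centralBinom_succ n
    omega

theorem sum_centralBinom_eq_jacobiSym {p : ℕ} (hp : p.Prime) (hp2 : p ≠ 2) :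
    ∑ k ∈ range p, (centralBinom k : ZMod (p ^ 2)) = jacobiSym p 3 := by
  have hbinom : ∑ d ∈ range p, (p.choose d : ℤ) * jacobiSym d 3 = 0 := by
    have h := sum_choose_mul_jacobiSym_three p 0
    rw [sum_range_succ, choose_self, (hp.odd_of_ne_two hp2).neg_one_pow, add_zero,
      jacobiSym_three_two_mul] at h
    simpa using h
  calc ∑ k ∈ range p, (centralBinom k : ZMod (p ^ 2))
      = ((∑ k ∈ range p, (centralBinom k : ℤ) : ℤ) : ZMod (p ^ 2)) := by push_cast; rfl
    _ = ∑ d ∈ range p, (jacobiSym d 3 : ZMod (p ^ 2)) * ((2 * p).choose (p + d) : ℕ) +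
          jacobiSym p 3 := by
      rw [sum_centralBinom_eq_sum_jacobiSym_mul_choose, sum_range_succ, ← two_mul, choose_self]
      push_cast
      ring
    _ = 2 * ((∑ d ∈ range p, (p.choose d : ℤ) * jacobiSym d 3 : ℤ) : ZMod (p ^ 2)) +
          jacobiSym p 3 := by
      rw [Int.cast_sum, mul_sum]
      congr 1
      refine sum_congr rfl fun d hd => ?_
      rw [(ZMod.natCast_eq_natCast_iff _ _ _).2 (choose_two_mul_add_modEq hp (mem_range.1 hd))]
      push_cast
      ring
    _ = jacobiSym p 3 := by rw [hbinom]; simp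

theorem two_mul_sum_catalan_eq {p : ℕ} (hp : p.Prime) (hp2 : p ≠ 2) :
    2 * ∑ n ∈ range p, (catalan n : ZMod (p ^ 2)) = 3 * jacobiSym p 3 - 1 := by
  have hcentral : (centralBinom p : ZMod (p ^ 2)) = 2 := by
    have h := choose_two_mul_add_modEq hp hp.pos
    rw [add_zero, choose_zero_right, ← centralBinom_eq_two_mul_choose] at h
    exact_mod_cast (ZMod.natCast_eq_natCast_iff _ _ _).2 h
  have h := congrArg (Nat.cast : ℕ → ZMod (p ^ 2)) (two_mul_sum_catalan_add_centralBinom p)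
  push_cast at h
  rw [hcentral, sum_centralBinom_eq_jacobiSym hp hp2] at h
  linear_combination h

theorem sum_catalan_mod_p_sq (p : ℕ) (hp : p.Prime) (hp5 : 5 ≤ p) :
    (p % 3 = 1 → (∑ n ∈ Finset.range p, (catalan n : ZMod (p ^ 2))) = 1) ∧
    (p % 3 = 2 → (∑ n ∈ Finset.range p, (catalan n : ZMod (p ^ 2))) = -2) := by
  have hp2 : p ≠ 2 := by omega
  have htwo : IsUnit (2 : ZMod (p ^ 2)) := by
    exact_mod_cast (ZMod.isUnit_iff_coprime 2 (p ^ 2)).2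
      (Nat.coprime_two_left.2 ((hp.odd_of_ne_two hp2).pow))
  have h := two_mul_sum_catalan_eq hp hp2
  rw [jacobiSym_three] at h
  refine ⟨fun h3 => htwo.mul_left_cancel ?_, fun h3 => htwo.mul_left_cancel ?_⟩
  · rw [h, if_pos h3]; norm_num
  · rw [h, if_neg (by omega), if_pos h3]; norm_num
end

section
/- For any prime p > 2, the triple sum ∑_{m1=0}^{p-1} ∑_{m2=0}^{p-1} ∑_{m3=0}^{p-1} (m1+m2+m3)! / (m1! · m2! · m3!) is congruent to 1 modulo p^3. -/
set_option maxHeartbeats 1000000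

open MvPolynomial Finset

namespace TripleSumAux

noncomputable section

abbrev MvP := MvPolynomial (Fin 3) ℤ

/-- exponent finsupp (a,b,c) -/
def tri (a b c : ℕ) : Fin 3 →₀ ℕ :=
  Finsupp.single 0 a + Finsupp.single 1 b + Finsupp.single 2 c

@[simp] lemma tri_apply_0 (a b c : ℕ) : tri a b c 0 = a := by
  simp [tri, Finsupp.single_apply]
@[simp] lemma tri_apply_1 (a b c : ℕ) : tri a b c 1 = b := by
  simp [tri, Finsupp.single_apply]
@[simp] lemma tri_apply_2 (a b c : ℕ) : tri a b c 2 = c := by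
  simp [tri, Finsupp.single_apply]

lemma tri_eq_tri_iff {a b c a' b' c' : ℕ} :
    tri a b c = tri a' b' c' ↔ a = a' ∧ b = b' ∧ c = c' := by
  constructor
  · intro h
    refine ⟨?_, ?_, ?_⟩
    · have := DFunLike.congr_fun h 0; simpa using this
    · have := DFunLike.congr_fun h 1; simpa using this
    · have := DFunLike.congr_fun h 2; simpa using this
  · rintro ⟨rfl, rfl, rfl⟩; rfl

lemma tri_le_tri {a b c a' b' c' : ℕ} (h1 : a ≤ a') (h2 : b ≤ b') (h3 : c ≤ c') :
    tri a b c ≤ tri a' b' c' := by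
  intro i
  fin_cases i <;> simpa

lemma tri_sub_tri (a b c a' b' c' : ℕ) :
    tri a b c - tri a' b' c' = tri (a - a') (b - b') (c - c') := by
  ext i
  fin_cases i <;> simp [Finsupp.tsub_apply]

lemma X_pow_mul_eq (a b c : ℕ) :
    (X 0 ^ a * X 1 ^ b * X 2 ^ c : MvP) = monomial (tri a b c) 1 := by
  simp [X_pow_eq_monomial, monomial_mul, tri]

lemma coeff_tri_X_pow_mul (a b c x y z : ℕ) :
    coeff (tri a b c) (X 0 ^ x * X 1 ^ y * X 2 ^ z : MvP)
      = if x = a ∧ y = b ∧ z = c then 1 else 0 := by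
  rw [X_pow_mul_eq, coeff_monomial]
  simp only [tri_eq_tri_iff]

/-! ### primality of the linear forms -/

lemma prime01 : Prime (X 0 + X 1 : MvP) := by
  have key := (MulEquiv.prime_iff (MvPolynomial.finSuccEquiv ℤ 2).toRingEquiv.toMulEquiv
    (p := (X 0 + X 1 : MvP))).symm
  rw [key]
  have h1 : ((1 : Fin 3)) = Fin.succ (0 : Fin 2) := rfl
  have : (MvPolynomial.finSuccEquiv ℤ 2).toRingEquiv.toMulEquiv (X 0 + X 1 : MvP)
      = Polynomial.X - Polynomial.C (-(X 0)) := by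
    show (MvPolynomial.finSuccEquiv ℤ 2) (X 0 + X 1 : MvP) = _
    rw [map_add, finSuccEquiv_X_zero, h1, finSuccEquiv_X_succ, map_neg, sub_neg_eq_add]
  rw [this]
  exact Polynomial.prime_X_sub_C _

lemma prime_rename (e : Fin 3 ≃ Fin 3) : Prime (X (e 0) + X (e 1) : MvP) := by
  have h := (MulEquiv.prime_iff (MvPolynomial.renameEquiv ℤ e).toRingEquiv.toMulEquiv
    (p := (X 0 + X 1 : MvP))).symm |>.mp prime01
  have : (MvPolynomial.renameEquiv ℤ e).toRingEquiv.toMulEquiv (X 0 + X 1 : MvP)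
      = X (e 0) + X (e 1) := by
    show rename e (X 0 + X 1 : MvP) = _
    rw [map_add, rename_X, rename_X]
  rwa [this] at h

lemma prime12 : Prime (X 1 + X 2 : MvP) := by
  have := prime_rename (finRotate 3)
  have h0 : (finRotate 3) 0 = 1 := by decide
  have h1 : (finRotate 3) 1 = 2 := by decide
  rwa [h0, h1] at this

lemma prime02 : Prime (X 0 + X 2 : MvP) := by
  have := prime_rename (Equiv.swap 1 2)
  have h0 : (Equiv.swap (1:Fin 3) 2) 0 = 0 := by decide
  have h1 : (Equiv.swap (1:Fin 3) 2) 1 = 2 := by decide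
  rwa [h0, h1] at this

lemma not_dvd_of_eval (v : Fin 3 → ℤ) {f g : MvP} (h : ¬ (eval v f ∣ eval v g)) :
    ¬ f ∣ g := by
  rintro ⟨k, rfl⟩
  exact h ⟨eval v k, by rw [map_mul]⟩

/-! ### coefficient of X^p vanishing -/

lemma coeff_mul_X_pow_p {p : ℕ} (hp : 0 < p) (f : MvP) (i : Fin 3) :
    coeff (tri (p-1) (p-1) (p-1)) (f * X i ^ p) = 0 := by
  rw [X_pow_eq_monomial, coeff_mul_monomial']
  rw [if_neg]
  intro hle
  have := hle i
  simp only [Finsupp.single_apply, if_pos rfl] at this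
  fin_cases i <;> simp at this <;> omega

/-! ### multinomial coefficient of w ^ (a+b+c) -/

lemma coeff_tri_w_pow (a b c : ℕ) :
    coeff (tri a b c) ((X 0 + X 1 + X 2 : MvP) ^ (a + b + c))
      = (Nat.multinomial Finset.univ ![a, b, c] : ℤ) := by
  have hsum : (X 0 + X 1 + X 2 : MvP) = ∑ i : Fin 3, X i := by
    rw [Fin.sum_univ_three]
  rw [hsum, Finset.sum_pow_eq_sum_piAntidiag]
  rw [coeff_sum]
  rw [Finset.sum_eq_single_of_mem (![a, b, c] : Fin 3 → ℕ)]
  · have hprod : (∏ i : Fin 3, (X i : MvP) ^ (![a,b,c] i)) = monomial (tri a b c) 1 := by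
      rw [Fin.prod_univ_three, ← X_pow_mul_eq]
      simp
    rw [hprod]
    have hcast : ((Nat.multinomial Finset.univ ![a,b,c] : ℕ) : MvP)
        = C ((Nat.multinomial Finset.univ ![a,b,c] : ℕ) : ℤ) := by
      push_cast
      simp
    rw [hcast, coeff_C_mul, coeff_monomial, if_pos rfl, mul_one]
  · rw [Finset.mem_piAntidiag]
    constructor
    · rw [Fin.sum_univ_three]; simp
    · intro i _; simp
  · intro k hk hne
    rw [Finset.mem_piAntidiag] at hk
    have hprod : (∏ i : Fin 3, (X i : MvP) ^ (k i)) = monomial (tri (k 0) (k 1) (k 2)) 1 := by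
      rw [Fin.prod_univ_three, ← X_pow_mul_eq]
    rw [hprod]
    have hcast : ((Nat.multinomial Finset.univ k : ℕ) : MvP)
        = C ((Nat.multinomial Finset.univ k : ℕ) : ℤ) := by
      push_cast
      simp
    rw [hcast, coeff_C_mul, coeff_monomial, if_neg, mul_zero]
    intro heq
    apply hne
    rw [tri_eq_tri_iff] at heq
    funext i
    fin_cases i <;> simp [heq.1, heq.2.1, heq.2.2]


lemma coeff_UVW (p : ℕ) :
    coeff (tri (p-1) (p-1) (p-1))
      ((∑ i ∈ range p, (X 0 + X 1 + X 2 : MvP) ^ i * X 0 ^ (p-1-i))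
      * (∑ i ∈ range p, (X 0 + X 1 + X 2 : MvP) ^ i * X 1 ^ (p-1-i))
      * (∑ i ∈ range p, (X 0 + X 1 + X 2 : MvP) ^ i * X 2 ^ (p-1-i)))
      = ∑ a ∈ range p, ∑ b ∈ range p, ∑ c ∈ range p,
          (Nat.multinomial Finset.univ ![a,b,c] : ℤ) := by
  have hexp : ((∑ i ∈ range p, (X 0 + X 1 + X 2 : MvP) ^ i * X 0 ^ (p-1-i))
      * (∑ i ∈ range p, (X 0 + X 1 + X 2 : MvP) ^ i * X 1 ^ (p-1-i))
      * (∑ i ∈ range p, (X 0 + X 1 + X 2 : MvP) ^ i * X 2 ^ (p-1-i)))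
      = ∑ a ∈ range p, ∑ b ∈ range p, ∑ c ∈ range p,
          (X 0 + X 1 + X 2 : MvP) ^ (a+b+c)
            * monomial (tri (p-1-a) (p-1-b) (p-1-c)) 1 := by
    rw [Finset.sum_mul_sum, Finset.sum_mul]
    refine Finset.sum_congr rfl fun a _ => ?_
    rw [Finset.sum_mul]
    refine Finset.sum_congr rfl fun b _ => ?_
    rw [Finset.mul_sum]
    refine Finset.sum_congr rfl fun c _ => ?_
    rw [← X_pow_mul_eq]
    ring
  rw [hexp]
  simp only [coeff_sum]
  refine Finset.sum_congr rfl fun a ha => Finset.sum_congr rfl fun b hb =>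
    Finset.sum_congr rfl fun c hc => ?_
  rw [mem_range] at ha hb hc
  rw [coeff_mul_monomial',
    if_pos (tri_le_tri (Nat.sub_le _ _) (Nat.sub_le _ _) (Nat.sub_le _ _)),
    tri_sub_tri]
  have h1 : p - 1 - (p - 1 - a) = a := by omega
  have h2 : p - 1 - (p - 1 - b) = b := by omega
  have h3 : p - 1 - (p - 1 - c) = c := by omega
  rw [h1, h2, h3, coeff_tri_w_pow, mul_one]

lemma coeff_ABC (p : ℕ) (hodd : Odd p) :
    coeff (tri (p-1) (p-1) (p-1))
      ((∑ i ∈ range p, (X 1 : MvP) ^ i * (-X 2) ^ (p-1-i))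
      * (∑ i ∈ range p, (X 0 : MvP) ^ i * (-X 2) ^ (p-1-i))
      * (∑ i ∈ range p, (X 0 : MvP) ^ i * (-X 1) ^ (p-1-i))) = 1 := by
  have hp0 : 0 < p := hodd.pos
  have hexp : ((∑ i ∈ range p, (X 1 : MvP) ^ i * (-X 2) ^ (p-1-i))
      * (∑ i ∈ range p, (X 0 : MvP) ^ i * (-X 2) ^ (p-1-i))
      * (∑ i ∈ range p, (X 0 : MvP) ^ i * (-X 1) ^ (p-1-i)))
      = ∑ i ∈ range p, ∑ j ∈ range p, ∑ k ∈ range p,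
          C ((-1:ℤ)^((p-1-i)+((p-1-j)+(p-1-k))))
            * (X 0 ^ (j+k) * X 1 ^ (i+(p-1-k)) * X 2 ^ ((p-1-i)+(p-1-j))) := by
    rw [Finset.sum_mul_sum, Finset.sum_mul]
    refine Finset.sum_congr rfl fun i _ => ?_
    rw [Finset.sum_mul]
    refine Finset.sum_congr rfl fun j _ => ?_
    rw [Finset.mul_sum]
    refine Finset.sum_congr rfl fun k _ => ?_
    have hC : (C ((-1:ℤ)^((p-1-i)+((p-1-j)+(p-1-k)))) : MvP)
        = (-1 : MvP) ^ ((p-1-i)+((p-1-j)+(p-1-k))) := by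
      rw [map_pow, map_neg, map_one]
    rw [hC]
    ring
  rw [hexp]
  simp only [coeff_sum]
  have hval : ∀ i ∈ range p, ∀ j ∈ range p, ∀ k ∈ range p,
      coeff (tri (p-1) (p-1) (p-1))
        (C ((-1:ℤ)^((p-1-i)+((p-1-j)+(p-1-k))))
          * (X 0 ^ (j+k) * X 1 ^ (i+(p-1-k)) * X 2 ^ ((p-1-i)+(p-1-j))))
      = if k = i then (if j = p-1-i then (-1:ℤ)^i else 0) else 0 := by
    intro i hi j hj k hk
    rw [mem_range] at hi hj hk
    rw [coeff_C_mul, coeff_tri_X_pow_mul]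
    by_cases hc : k = i ∧ j = p-1-i
    · obtain ⟨rfl, rfl⟩ := hc
      rw [if_pos (by omega), if_pos rfl, if_pos rfl, mul_one]
      have he : (p-1-k)+((p-1-(p-1-k))+(p-1-k)) = 2*(p-1-k) + k := by omega
      rw [he, pow_add, pow_mul, neg_one_sq, one_pow, one_mul]
    · rw [if_neg (by intro hcond; exact hc (by omega)), mul_zero]
      by_cases h1 : k = i
      · subst h1
        rw [if_pos rfl, if_neg (by intro h2; exact hc ⟨rfl, h2⟩)]
      · rw [if_neg h1]
  calc (∑ i ∈ range p, ∑ j ∈ range p, ∑ k ∈ range p,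
        coeff (tri (p-1) (p-1) (p-1))
          (C ((-1:ℤ)^((p-1-i)+((p-1-j)+(p-1-k))))
            * (X 0 ^ (j+k) * X 1 ^ (i+(p-1-k)) * X 2 ^ ((p-1-i)+(p-1-j)))))
      = ∑ i ∈ range p, ∑ j ∈ range p, ∑ k ∈ range p,
          (if k = i then (if j = p-1-i then (-1:ℤ)^i else 0) else 0) := by
        refine Finset.sum_congr rfl fun i hi => Finset.sum_congr rfl fun j hj =>
          Finset.sum_congr rfl fun k hk => hval i hi j hj k hk
    _ = ∑ i ∈ range p, ∑ j ∈ range p, (if j = p-1-i then (-1:ℤ)^i else 0) := by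
        refine Finset.sum_congr rfl fun i hi => Finset.sum_congr rfl fun j hj => ?_
        rw [mem_range] at hi
        rw [Finset.sum_ite_eq' (range p) i, if_pos (mem_range.mpr hi)]
    _ = ∑ i ∈ range p, (-1:ℤ)^i := by
        refine Finset.sum_congr rfl fun i hi => ?_
        rw [mem_range] at hi
        rw [Finset.sum_ite_eq' (range p) (p-1-i), if_pos (mem_range.mpr (by omega))]
    _ = 1 := by
        rw [neg_one_geom_sum, if_neg (Nat.not_even_iff_odd.mpr hodd)]


theorem key (p : ℕ) (hp : p.Prime) (hodd : Odd p) :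
    ∃ d : ℤ, (∑ a ∈ range p, ∑ b ∈ range p, ∑ c ∈ range p,
      (Nat.multinomial Finset.univ ![a, b, c] : ℤ)) = 1 + (p:ℤ)^3 * d := by
  have hp0 : 0 < p := hp.pos
  have hFact : Fact p.Prime := ⟨hp⟩
  -- p divides E := w^p - x^p - y^p - z^p
  have hpdvd : C (p:ℤ) ∣ ((X 0 + X 1 + X 2 : MvP) ^ p - X 0 ^ p - X 1 ^ p - X 2 ^ p) := by
    rw [C_dvd_iff_dvd_coeff]
    intro m
    have hmap : (MvPolynomial.map (Int.castRingHom (ZMod p)))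
        ((X 0 + X 1 + X 2 : MvP) ^ p - X 0 ^ p - X 1 ^ p - X 2 ^ p) = 0 := by
      simp only [map_sub, map_pow, map_add, MvPolynomial.map_X]
      rw [add_pow_char, add_pow_char]
      ring
    have h2 := congrArg (coeff m) hmap
    rw [coeff_map] at h2
    have h3 : ((coeff m ((X 0 + X 1 + X 2 : MvP) ^ p - X 0 ^ p - X 1 ^ p - X 2 ^ p) : ℤ) : ZMod p)
        = 0 := by simpa using h2
    exact_mod_cast (ZMod.intCast_zmod_eq_zero_iff_dvd _ p).mp h3
  obtain ⟨e0, he0⟩ := hpdvd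
  -- geometric sum identities
  have gU0 : (∑ i ∈ range p, (X 0 + X 1 + X 2 : MvP) ^ i * X 0 ^ (p - 1 - i)) * (X 1 + X 2)
      = (X 0 + X 1 + X 2 : MvP) ^ p - X 0 ^ p := by
    have h := geom_sum₂_mul (X 0 + X 1 + X 2 : MvP) (X 0) p
    linear_combination h
  have gU1 : (∑ i ∈ range p, (X 0 + X 1 + X 2 : MvP) ^ i * X 1 ^ (p - 1 - i)) * (X 0 + X 2)
      = (X 0 + X 1 + X 2 : MvP) ^ p - X 1 ^ p := by
    have h := geom_sum₂_mul (X 0 + X 1 + X 2 : MvP) (X 1) p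
    linear_combination h
  have gU2 : (∑ i ∈ range p, (X 0 + X 1 + X 2 : MvP) ^ i * X 2 ^ (p - 1 - i)) * (X 0 + X 1)
      = (X 0 + X 1 + X 2 : MvP) ^ p - X 2 ^ p := by
    have h := geom_sum₂_mul (X 0 + X 1 + X 2 : MvP) (X 2) p
    linear_combination h
  have gA0 : (∑ i ∈ range p, (X 1 : MvP) ^ i * (-X 2) ^ (p - 1 - i)) * (X 1 + X 2)
      = X 1 ^ p + X 2 ^ p := by
    have h := geom_sum₂_mul (X 1 : MvP) (-X 2) p
    rw [hodd.neg_pow] at h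
    linear_combination h
  have gA1 : (∑ i ∈ range p, (X 0 : MvP) ^ i * (-X 2) ^ (p - 1 - i)) * (X 0 + X 2)
      = X 0 ^ p + X 2 ^ p := by
    have h := geom_sum₂_mul (X 0 : MvP) (-X 2) p
    rw [hodd.neg_pow] at h
    linear_combination h
  have gA2 : (∑ i ∈ range p, (X 0 : MvP) ^ i * (-X 1) ^ (p - 1 - i)) * (X 0 + X 1)
      = X 0 ^ p + X 1 ^ p := by
    have h := geom_sum₂_mul (X 0 : MvP) (-X 1) p
    rw [hodd.neg_pow] at h
    linear_combination h
  -- divisibility of E by the three linear forms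
  have hq1E : ((X 0 + X 1 + X 2 : MvP) ^ p - X 0 ^ p - X 1 ^ p - X 2 ^ p)
      = (X 1 + X 2) * ((∑ i ∈ range p, (X 0 + X 1 + X 2 : MvP) ^ i * X 0 ^ (p - 1 - i))
          - (∑ i ∈ range p, (X 1 : MvP) ^ i * (-X 2) ^ (p - 1 - i))) := by
    linear_combination gA0 - gU0
  have hq2E : ((X 0 + X 1 + X 2 : MvP) ^ p - X 0 ^ p - X 1 ^ p - X 2 ^ p)
      = (X 0 + X 2) * ((∑ i ∈ range p, (X 0 + X 1 + X 2 : MvP) ^ i * X 1 ^ (p - 1 - i))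
          - (∑ i ∈ range p, (X 0 : MvP) ^ i * (-X 2) ^ (p - 1 - i))) := by
    linear_combination gA1 - gU1
  have hq3E : ((X 0 + X 1 + X 2 : MvP) ^ p - X 0 ^ p - X 1 ^ p - X 2 ^ p)
      = (X 0 + X 1) * ((∑ i ∈ range p, (X 0 + X 1 + X 2 : MvP) ^ i * X 2 ^ (p - 1 - i))
          - (∑ i ∈ range p, (X 0 : MvP) ^ i * (-X 1) ^ (p - 1 - i))) := by
    linear_combination gA2 - gU2
  -- non-divisibility facts
  have hp2' : ¬ ((2:ℤ) ∣ (p:ℤ)) := by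
    have : ¬ (2 ∣ p) := by rcases hodd with ⟨k, hk⟩; omega
    exact_mod_cast this
  have hnd1 : ¬ ((X 1 + X 2 : MvP) ∣ C (p:ℤ)) := by
    apply not_dvd_of_eval ![0, 1, 1]
    simpa using hp2'
  have hnd2C : ¬ ((X 0 + X 2 : MvP) ∣ C (p:ℤ)) := by
    apply not_dvd_of_eval ![1, 0, 1]
    simpa using hp2'
  have hnd21 : ¬ ((X 0 + X 2 : MvP) ∣ (X 1 + X 2 : MvP)) := by
    apply not_dvd_of_eval ![1, 0, 1]
    simp
  have hnd3C : ¬ ((X 0 + X 1 : MvP) ∣ C (p:ℤ)) := by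
    apply not_dvd_of_eval ![1, 1, 0]
    simpa using hp2'
  have hnd31 : ¬ ((X 0 + X 1 : MvP) ∣ (X 1 + X 2 : MvP)) := by
    apply not_dvd_of_eval ![1, 1, 0]
    simp
  have hnd32 : ¬ ((X 0 + X 1 : MvP) ∣ (X 0 + X 2 : MvP)) := by
    apply not_dvd_of_eval ![1, 1, 0]
    simp
  -- extract the factor q1
  have h1 : (X 1 + X 2 : MvP) ∣ C (p:ℤ) * e0 := by
    rw [← he0]; exact ⟨_, hq1E⟩
  have h1' := (prime12.dvd_mul).mp h1
  rcases h1' with h | h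
  · exact absurd h hnd1
  obtain ⟨e1, he1⟩ := h
  -- extract q2
  have h2 : (X 0 + X 2 : MvP) ∣ C (p:ℤ) * ((X 1 + X 2) * e1) := by
    rw [← he1, ← he0]; exact ⟨_, hq2E⟩
  rcases (prime02.dvd_mul).mp h2 with h | h
  · exact absurd h hnd2C
  rcases (prime02.dvd_mul).mp h with h | h
  · exact absurd h hnd21
  obtain ⟨e2, he2⟩ := h
  -- extract q3
  have h3 : (X 0 + X 1 : MvP) ∣ C (p:ℤ) * ((X 1 + X 2) * ((X 0 + X 2) * e2)) := by
    rw [← he2, ← he1, ← he0]; exact ⟨_, hq3E⟩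
  rcases (prime01.dvd_mul).mp h3 with h | h
  · exact absurd h hnd3C
  rcases (prime01.dvd_mul).mp h with h | h
  · exact absurd h hnd31
  rcases (prime01.dvd_mul).mp h with h | h
  · exact absurd h hnd32
  obtain ⟨Hh, heH⟩ := h
  -- the key decomposition of w^p
  have hE : (X 0 + X 1 + X 2 : MvP) ^ p = X 0 ^ p + X 1 ^ p + X 2 ^ p
      + C (p:ℤ) * ((X 1 + X 2) * ((X 0 + X 2) * ((X 0 + X 1) * Hh))) := by
    have h := he0
    rw [he1, he2, heH] at h
    linear_combination h
  -- abbreviation-free main identity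
  have f0 : (∑ i ∈ range p, (X 0 + X 1 + X 2 : MvP) ^ i * X 0 ^ (p - 1 - i)) * (X 1 + X 2)
      = (X 1 ^ p + X 2 ^ p)
        + C (p:ℤ) * ((X 1 + X 2) * ((X 0 + X 2) * ((X 0 + X 1) * Hh))) := by
    linear_combination gU0 + hE
  have f1 : (∑ i ∈ range p, (X 0 + X 1 + X 2 : MvP) ^ i * X 1 ^ (p - 1 - i)) * (X 0 + X 2)
      = (X 0 ^ p + X 2 ^ p)
        + C (p:ℤ) * ((X 1 + X 2) * ((X 0 + X 2) * ((X 0 + X 1) * Hh))) := by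
    linear_combination gU1 + hE
  have f2 : (∑ i ∈ range p, (X 0 + X 1 + X 2 : MvP) ^ i * X 2 ^ (p - 1 - i)) * (X 0 + X 1)
      = (X 0 ^ p + X 1 ^ p)
        + C (p:ℤ) * ((X 1 + X 2) * ((X 0 + X 2) * ((X 0 + X 1) * Hh))) := by
    linear_combination gU2 + hE
  have hmain :
      ((∑ i ∈ range p, (X 0 + X 1 + X 2 : MvP) ^ i * X 0 ^ (p - 1 - i))
        * (∑ i ∈ range p, (X 0 + X 1 + X 2 : MvP) ^ i * X 1 ^ (p - 1 - i))
        * (∑ i ∈ range p, (X 0 + X 1 + X 2 : MvP) ^ i * X 2 ^ (p - 1 - i)))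
        * ((X 1 + X 2) * ((X 0 + X 2) * (X 0 + X 1)))
      = ((∑ i ∈ range p, (X 1 : MvP) ^ i * (-X 2) ^ (p - 1 - i))
          * (∑ i ∈ range p, (X 0 : MvP) ^ i * (-X 2) ^ (p - 1 - i))
          * (∑ i ∈ range p, (X 0 : MvP) ^ i * (-X 1) ^ (p - 1 - i))
        + C (p:ℤ) * (Hh * ((X 1 ^ p + X 2 ^ p) * (X 0 ^ p + X 2 ^ p)
            + (X 1 ^ p + X 2 ^ p) * (X 0 ^ p + X 1 ^ p)
            + (X 0 ^ p + X 2 ^ p) * (X 0 ^ p + X 1 ^ p)))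
        + C (p:ℤ) ^ 2 * ((X 1 + X 2) * ((X 0 + X 2) * (X 0 + X 1)) * Hh ^ 2
            * ((X 1 ^ p + X 2 ^ p) + (X 0 ^ p + X 2 ^ p) + (X 0 ^ p + X 1 ^ p)))
        + C (p:ℤ) ^ 3 * (((X 1 + X 2) * ((X 0 + X 2) * (X 0 + X 1))) ^ 2 * Hh ^ 3))
        * ((X 1 + X 2) * ((X 0 + X 2) * (X 0 + X 1))) := by
    linear_combination
      ((∑ i ∈ range p, (X 0 + X 1 + X 2 : MvP) ^ i * X 1 ^ (p - 1 - i)) * (X 0 + X 2)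
        * ((∑ i ∈ range p, (X 0 + X 1 + X 2 : MvP) ^ i * X 2 ^ (p - 1 - i)) * (X 0 + X 1))) * f0
      + (((X 1 ^ p + X 2 ^ p)
            + C (p:ℤ) * ((X 1 + X 2) * ((X 0 + X 2) * ((X 0 + X 1) * Hh))))
          * ((∑ i ∈ range p, (X 0 + X 1 + X 2 : MvP) ^ i * X 2 ^ (p - 1 - i)) * (X 0 + X 1))) * f1
      + (((X 1 ^ p + X 2 ^ p)
            + C (p:ℤ) * ((X 1 + X 2) * ((X 0 + X 2) * ((X 0 + X 1) * Hh))))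
          * ((X 0 ^ p + X 2 ^ p)
            + C (p:ℤ) * ((X 1 + X 2) * ((X 0 + X 2) * ((X 0 + X 1) * Hh))))) * f2
      - ((∑ i ∈ range p, (X 0 : MvP) ^ i * (-X 2) ^ (p - 1 - i)) * (X 0 + X 2)
          * ((∑ i ∈ range p, (X 0 : MvP) ^ i * (-X 1) ^ (p - 1 - i)) * (X 0 + X 1))) * gA0
      - ((X 1 ^ p + X 2 ^ p)
          * ((∑ i ∈ range p, (X 0 : MvP) ^ i * (-X 1) ^ (p - 1 - i)) * (X 0 + X 1))) * gA1
      - ((X 1 ^ p + X 2 ^ p) * (X 0 ^ p + X 2 ^ p)) * gA2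
  -- cancel the regular factor
  have hDne : ((X 1 + X 2 : MvP) * ((X 0 + X 2) * (X 0 + X 1))) ≠ 0 :=
    mul_ne_zero prime12.ne_zero (mul_ne_zero prime02.ne_zero prime01.ne_zero)
  have hUVW := mul_right_cancel₀ hDne hmain
  -- take the coefficient at (p-1, p-1, p-1)
  have hc := congrArg (coeff (tri (p-1) (p-1) (p-1))) hUVW
  rw [coeff_UVW p] at hc
  rw [coeff_add, coeff_add, coeff_add] at hc
  rw [coeff_ABC p hodd] at hc
  rw [← map_pow, ← map_pow, coeff_C_mul, coeff_C_mul, coeff_C_mul] at hc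
  -- middle terms vanish
  have hN1 : coeff (tri (p-1) (p-1) (p-1))
      (Hh * ((X 1 ^ p + X 2 ^ p) * (X 0 ^ p + X 2 ^ p)
        + (X 1 ^ p + X 2 ^ p) * (X 0 ^ p + X 1 ^ p)
        + (X 0 ^ p + X 2 ^ p) * (X 0 ^ p + X 1 ^ p)) : MvP) = 0 := by
    have hsplit : (Hh * ((X 1 ^ p + X 2 ^ p) * (X 0 ^ p + X 2 ^ p)
        + (X 1 ^ p + X 2 ^ p) * (X 0 ^ p + X 1 ^ p)
        + (X 0 ^ p + X 2 ^ p) * (X 0 ^ p + X 1 ^ p)) : MvP)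
      = (Hh * X 1 ^ p) * X 0 ^ p + (Hh * X 1 ^ p) * X 2 ^ p
        + (Hh * X 2 ^ p) * X 0 ^ p + (Hh * X 2 ^ p) * X 2 ^ p
        + ((Hh * X 1 ^ p) * X 0 ^ p + (Hh * X 1 ^ p) * X 1 ^ p
          + (Hh * X 2 ^ p) * X 0 ^ p + (Hh * X 2 ^ p) * X 1 ^ p)
        + ((Hh * X 0 ^ p) * X 0 ^ p + (Hh * X 0 ^ p) * X 1 ^ p
          + (Hh * X 2 ^ p) * X 0 ^ p + (Hh * X 2 ^ p) * X 1 ^ p) := by ring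
    rw [hsplit]
    simp only [coeff_add, coeff_mul_X_pow_p hp0]
    norm_num
  have hN2 : coeff (tri (p-1) (p-1) (p-1))
      ((X 1 + X 2) * ((X 0 + X 2) * (X 0 + X 1)) * Hh ^ 2
        * ((X 1 ^ p + X 2 ^ p) + (X 0 ^ p + X 2 ^ p) + (X 0 ^ p + X 1 ^ p)) : MvP) = 0 := by
    have hsplit : ((X 1 + X 2) * ((X 0 + X 2) * (X 0 + X 1)) * Hh ^ 2
        * ((X 1 ^ p + X 2 ^ p) + (X 0 ^ p + X 2 ^ p) + (X 0 ^ p + X 1 ^ p)) : MvP)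
      = ((X 1 + X 2) * ((X 0 + X 2) * (X 0 + X 1)) * Hh ^ 2) * X 1 ^ p
        + ((X 1 + X 2) * ((X 0 + X 2) * (X 0 + X 1)) * Hh ^ 2) * X 2 ^ p
        + ((X 1 + X 2) * ((X 0 + X 2) * (X 0 + X 1)) * Hh ^ 2) * X 0 ^ p
        + ((X 1 + X 2) * ((X 0 + X 2) * (X 0 + X 1)) * Hh ^ 2) * X 2 ^ p
        + ((X 1 + X 2) * ((X 0 + X 2) * (X 0 + X 1)) * Hh ^ 2) * X 0 ^ p
        + ((X 1 + X 2) * ((X 0 + X 2) * (X 0 + X 1)) * Hh ^ 2) * X 1 ^ p := by ring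
    rw [hsplit]
    simp only [coeff_add, coeff_mul_X_pow_p hp0]
    norm_num
  rw [hN1, hN2] at hc
  refine ⟨coeff (tri (p-1) (p-1) (p-1))
    ((((X 1 + X 2) * ((X 0 + X 2) * (X 0 + X 1))) ^ 2 * Hh ^ 3 : MvP)), ?_⟩
  rw [hc]
  ring

end

end TripleSumAux

theorem triple_sum_multinomial_mod_p_cube (p : ℕ) (hp : p.Prime) (hp2 : 2 < p) :
    (∑ m1 ∈ Finset.range p, ∑ m2 ∈ Finset.range p, ∑ m3 ∈ Finset.range p,
      (Nat.multinomial Finset.univ ![m1, m2, m3] : ZMod (p ^ 3))) = 1 := by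
  have hodd : Odd p := hp.odd_of_ne_two (by omega)
  obtain ⟨d, hd⟩ := TripleSumAux.key p hp hodd
  have hcast := congrArg (fun z : ℤ => (z : ZMod (p ^ 3))) hd
  simp only [Int.cast_add, Int.cast_mul, Int.cast_one, Int.cast_pow, Int.cast_natCast] at hcast
  push_cast at hcast
  have hz : ((p : ZMod (p ^ 3)))^3 = 0 := by
    have : ((p ^ 3 : ℕ) : ZMod (p ^ 3)) = 0 := ZMod.natCast_self _
    push_cast at this
    exact this
  rw [hz, zero_mul, add_zero] at hcast
  rw [← hcast]
end

section
/- For every odd prime p, the coefficient of x^{p-1} y^{p-1} z^{p-1} in the polynomial (∑_{i=0}^{p-1} (-1)^i y^i z^{p-1-i}) · (∑_{j=0}^{p-1} (-1)^j z^j x^{p-1-j}) · (∑_{k=0}^{p-1} (-1)^k x^k y^{p-1-k}) equals 1. -/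
/-!
Write `q = p - 1`. A term `yⁱz^(q-i) · zʲx^(q-j) · xᵏy^(q-k)` of the expansion is `(xyz)^q`
exactly when `i = j = k`, so the coefficient is `∑_{i<p} (-1)^(3i) = ∑_{i<p} (-1)^i`, which is `1`
because `p` is odd.
-/

open MvPolynomial Finset

section

variable {R : Type*} [CommSemiring R]

theorem C_mul_X_pow_mul_X_pow {σ : Type*} (a : R) (s t : σ) (m n : ℕ) :
    C a * X s ^ m * X t ^ n = monomial (Finsupp.single s m + Finsupp.single t n) a := by
  rw [C_mul_X_pow_eq_monomial, X_pow_eq_monomial, monomial_mul, mul_one]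

theorem cyclic_exponents_eq_const_iff {n i j k : ℕ} (hj : j ≤ n) (hk : k ≤ n) :
    Finsupp.single 1 i + Finsupp.single 2 (n - i) + (Finsupp.single 2 j + Finsupp.single 0 (n - j))
        + (Finsupp.single 0 k + Finsupp.single 1 (n - k))
        = Finsupp.equivFunOnFinite.symm (fun _ : Fin 3 => n) ↔ i = j ∧ j = k := by
  rw [Finsupp.ext_iff, Fin.forall_fin_succ, Fin.forall_fin_succ, Fin.forall_fin_one]
  simp
  omega

theorem coeff_const_cyclic_product (n : ℕ) (a b c : ℕ → R) :
    coeff (Finsupp.equivFunOnFinite.symm fun _ : Fin 3 => n)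
      ((∑ i ∈ range (n + 1), C (a i) * X 1 ^ i * X 2 ^ (n - i)) *
       (∑ j ∈ range (n + 1), C (b j) * X 2 ^ j * X 0 ^ (n - j)) *
       (∑ k ∈ range (n + 1), C (c k) * X 0 ^ k * X 1 ^ (n - k)))
      = ∑ i ∈ range (n + 1), a i * b i * c i := by
  classical
  simp only [C_mul_X_pow_mul_X_pow, sum_mul, mul_sum, monomial_mul, coeff_sum, coeff_monomial]
  refine sum_congr rfl fun k hk => ?_
  rw [sum_congr rfl fun j hj => sum_congr rfl fun i _ => if_congr
    (cyclic_exponents_eq_const_iff (mem_range_succ_iff.mp hj) (mem_range_succ_iff.mp hk)) rfl rfl]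
  simp only [ite_and, sum_ite_eq']
  rw [sum_ite_of_true fun j hj => hj, sum_ite_eq', if_pos hk]

end

theorem coeff_triple_product_general (p : ℕ) (hodd : Odd p) :
    MvPolynomial.coeff (Finsupp.equivFunOnFinite.symm fun _ : Fin 3 => p - 1)
      ((∑ i ∈ Finset.range p, (-1 : MvPolynomial (Fin 3) ℤ) ^ i * X 1 ^ i * X 2 ^ (p - 1 - i)) *
       (∑ j ∈ Finset.range p, (-1 : MvPolynomial (Fin 3) ℤ) ^ j * X 2 ^ j * X 0 ^ (p - 1 - j)) *
       (∑ k ∈ Finset.range p, (-1 : MvPolynomial (Fin 3) ℤ) ^ k * X 0 ^ k * X 1 ^ (p - 1 - k))) = 1 := by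
  obtain ⟨n, rfl⟩ : ∃ n, p = n + 1 := Nat.exists_eq_add_one.mpr hodd.pos
  have hC : ∀ i : ℕ, (-1 : MvPolynomial (Fin 3) ℤ) ^ i = C ((-1) ^ i) := by simp
  simp only [hC, Nat.add_sub_cancel, coeff_const_cyclic_product]
  calc ∑ i ∈ range (n + 1), (-1 : ℤ) ^ i * (-1) ^ i * (-1) ^ i
      = ∑ i ∈ range (n + 1), (-1 : ℤ) ^ i := sum_congr rfl fun i _ => by
        rw [← pow_add, Even.neg_one_pow ⟨i, rfl⟩, one_mul]
    _ = 1 := by rw [neg_one_geom_sum, if_neg (Nat.not_even_iff_odd.mpr hodd)]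

theorem coeff_triple_product (p : ℕ) (hp : p.Prime) (hodd : Odd p) :
    MvPolynomial.coeff (Finsupp.equivFunOnFinite.symm fun _ : Fin 3 => p - 1)
      ((∑ i ∈ Finset.range p, (-1 : MvPolynomial (Fin 3) ℤ) ^ i * X 1 ^ i * X 2 ^ (p - 1 - i)) *
       (∑ j ∈ Finset.range p, (-1 : MvPolynomial (Fin 3) ℤ) ^ j * X 2 ^ j * X 0 ^ (p - 1 - j)) *
       (∑ k ∈ Finset.range p, (-1 : MvPolynomial (Fin 3) ℤ) ^ k * X 0 ^ k * X 1 ^ (p - 1 - k))) = 1 :=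
  coeff_triple_product_general p hodd
end
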